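/- arXiv:2101.01994 — 6 statements merged into one kernel-verified Lean document; each statement's English description precedes it below -/
import Mathlib

section
/- Let E be a Banach space (over ℝ or ℂ) and let F be a maximal convex subset of the unit sphere S(E). Then there exists an extreme point φ of the closed unit ball B(E*) of the dual space E* such that φ⁻¹(1) ∩ S(E) = F. -/
/-!
Separating `F` from the open unit ball by Hahn–Banach gives a functional of norm at most one
that equals `1` on `F`. Since `1` is an extreme point of the unit disc of `𝕜`, the functionals of
norm at most one equal to `1` on `F` form a face of the dual unit ball; this face is weak-* closed,
hence weak-* compact by Banach–Alaoglu, and Krein–Milman gives an extreme point `φ` of it, which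
is then an extreme point of the whole ball. The slice `φ⁻¹(1) ∩ S(E)` is convex and contains `F`,
so it equals `F` by maximality.
-/

open Metric RCLike Set

theorem RCLike.eq_one_of_norm_le_one_of_re_eq_one {𝕜 : Type*} [RCLike 𝕜] {z : 𝕜}
    (hz : ‖z‖ ≤ 1) (hre : re z = 1) : z = 1 := by
  simpa [hre] using (re_eq_self_of_le (hz.trans_eq hre.symm)).symm

theorem RCLike.one_mem_extremePoints_closedBall {𝕜 : Type*} [RCLike 𝕜] :
    (1 : 𝕜) ∈ extremePoints ℝ (closedBall (0 : 𝕜) 1) := by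
  refine mem_extremePoints_iff_left.2 ⟨by simp, fun z hz w hw ⟨a, b, ha, hb, hab, hsum⟩ => ?_⟩
  rw [mem_closedBall_zero_iff] at hz hw
  have hre : a * re z + b * re w = 1 := by
    simpa [RCLike.smul_re] using congrArg re hsum
  have hzre : re z ≤ 1 := (re_le_norm z).trans hz
  have hwre : re w ≤ 1 := (re_le_norm w).trans hw
  exact eq_one_of_norm_le_one_of_re_eq_one hz (by nlinarith)

theorem exists_norm_le_one_forall_eq_one {E : Type*} [SeminormedAddCommGroup E] [NormedSpace ℝ E]
    {F : Set E} (hFsub : F ⊆ sphere 0 1) (hFconv : Convex ℝ F) :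
    ∃ g : StrongDual ℝ E, ‖g‖ ≤ 1 ∧ ∀ x ∈ F, g x = 1 := by
  have hdisj : Disjoint (ball (0 : E) 1) F :=
    Set.disjoint_left.2 fun x hx hxF =>
      (mem_ball_zero_iff.1 hx).ne (mem_sphere_zero_iff_norm.1 (hFsub hxF))
  obtain ⟨f, u, hfu, huf⟩ := geometric_hahn_banach_open (convex_ball 0 1) isOpen_ball hFconv hdisj
  have hu : 0 < u := by simpa using hfu 0 (mem_ball_self one_pos)
  have hf_closedBall : ∀ x ∈ closedBall (0 : E) 1, f x ≤ u := by
    rw [← closure_ball (0 : E) one_ne_zero]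
    exact closure_minimal (fun x hx => (hfu x hx).le) (isClosed_le f.continuous continuous_const)
  have hf_norm : ‖f‖ ≤ u := by
    refine ContinuousLinearMap.opNorm_le_of_unit_norm hu.le fun x hx => abs_le.2 ⟨?_, ?_⟩
    · have := hf_closedBall (-x) (by simp [hx])
      rw [map_neg] at this
      linarith
    · exact hf_closedBall x (by simp [hx])
  refine ⟨u⁻¹ • f, ?_, fun x hx => ?_⟩
  · rw [norm_smul, norm_inv, Real.norm_of_nonneg hu.le]
    exact inv_mul_le_one_of_le₀ hf_norm hu.le
  · have hfx : f x = u :=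
      le_antisymm (hf_closedBall x (sphere_subset_closedBall (hFsub hx))) (huf x hx)
    simp [hfx, hu.ne']

section Dual

variable {𝕜 E : Type*} [RCLike 𝕜] [SeminormedAddCommGroup E] [NormedSpace 𝕜 E]

theorem exists_strongDual_mem_closedBall_forall_eq_one [NormedSpace ℝ E] [IsScalarTower ℝ 𝕜 E]
    {F : Set E} (hFsub : F ⊆ sphere 0 1) (hFconv : Convex ℝ F) :
    ∃ φ : StrongDual 𝕜 E, φ ∈ closedBall 0 1 ∩ {φ | ∀ x ∈ F, φ x = 1} := by
  obtain ⟨g, hg, hgF⟩ := exists_norm_le_one_forall_eq_one hFsub hFconv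
  refine ⟨g.extendRCLike, by simpa using hg, fun x hx => ?_⟩
  refine eq_one_of_norm_le_one_of_re_eq_one ?_ (by simp [hgF x hx])
  calc ‖(g.extendRCLike x : 𝕜)‖ ≤ ‖g‖ * ‖x‖ := g.norm_extendRCLike_bound x
    _ ≤ 1 := by simpa [mem_sphere_zero_iff_norm.1 (hFsub hx)] using hg

theorem isExtreme_closedBall_inter_setOf_forall_eq_one {F : Set E} (hF : F ⊆ closedBall 0 1) :
    IsExtreme ℝ (closedBall (0 : StrongDual 𝕜 E) 1) (closedBall 0 1 ∩ {φ | ∀ x ∈ F, φ x = 1}) := by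
  refine ⟨inter_subset_left, fun φ₁ hφ₁ φ₂ hφ₂ φ ⟨_, hφF⟩ hφ => ⟨hφ₁, fun x hx => ?_⟩⟩
  have hx1 : ‖x‖ ≤ 1 := mem_closedBall_zero_iff.1 (hF hx)
  have hmem : ∀ ψ ∈ closedBall (0 : StrongDual 𝕜 E) 1, ψ x ∈ closedBall (0 : 𝕜) 1 := fun ψ hψ =>
    mem_closedBall_zero_iff.2 <|
      (ψ.le_opNorm x).trans (mul_le_one₀ (mem_closedBall_zero_iff.1 hψ) (norm_nonneg x) hx1)
  have hseg : (1 : 𝕜) ∈ openSegment ℝ (φ₁ x) (φ₂ x) := by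
    obtain ⟨a, b, ha, hb, hab, rfl⟩ := hφ
    exact ⟨a, b, ha, hb, hab, by simpa using hφF x hx⟩
  exact one_mem_extremePoints_closedBall.2 (hmem φ₁ hφ₁) (hmem φ₂ hφ₂) hseg

theorem IsExtreme.exists_mem_extremePoints_closedBall {B : Set (StrongDual 𝕜 E)}
    (hB : IsExtreme ℝ (closedBall 0 1) B) (hBne : B.Nonempty)
    (hBclosed : IsClosed (WeakDual.toStrongDual ⁻¹' B : Set (WeakDual 𝕜 E))) :
    ∃ φ ∈ B, φ ∈ extremePoints ℝ (closedBall 0 1) := by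
  have hcompact : IsCompact (WeakDual.toStrongDual ⁻¹' B : Set (WeakDual 𝕜 E)) :=
    (WeakDual.isCompact_closedBall 0 1).of_isClosed_subset hBclosed fun _ hφ => hB.subset hφ
  have : LocallyConvexSpace ℝ (WeakDual 𝕜 E) := WeakBilin.locallyConvexSpace
  obtain ⟨φ, hφ⟩ := hcompact.extremePoints_nonempty hBne
  exact ⟨φ, hφ.1, hB.extremePoints_subset_extremePoints hφ⟩

theorem WeakDual.isClosed_closedBall_inter_setOf_forall_eq_one (F : Set E) :
    IsClosed (WeakDual.toStrongDual ⁻¹' (closedBall 0 1 ∩ {φ | ∀ x ∈ F, φ x = 1}) :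
      Set (WeakDual 𝕜 E)) := by
  refine (WeakDual.isClosed_closedBall 0 1).inter ?_
  simp only [ofPred_forall]
  exact isClosed_biInter fun x _ => isClosed_eq (WeakDual.eval_continuous x) continuous_const

theorem convex_setOf_apply_eq_one_inter_sphere [NormedSpace ℝ E] [IsScalarTower ℝ 𝕜 E]
    {φ : StrongDual 𝕜 E} (hφ : ‖φ‖ ≤ 1) :
    Convex ℝ ({e | φ e = 1} ∩ sphere (0 : E) 1) := by
  have hslice : {e | φ e = 1} ∩ sphere (0 : E) 1 = {e | φ e = 1} ∩ closedBall 0 1 := by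
    refine Subset.antisymm (inter_subset_inter_right _ sphere_subset_closedBall)
      fun e ⟨he, he1⟩ => ⟨he, ?_⟩
    refine mem_sphere_zero_iff_norm.2 (le_antisymm (mem_closedBall_zero_iff.1 he1) ?_)
    calc (1 : ℝ) = ‖φ e‖ := by rw [show φ e = 1 from he, norm_one]
      _ ≤ ‖φ‖ * ‖e‖ := φ.le_opNorm e
      _ ≤ ‖e‖ := mul_le_of_le_one_left (norm_nonneg e) hφ
  rw [hslice]
  exact ((convex_singleton 1).linear_preimage (φ.toLinearMap.restrictScalars ℝ)).inter
    (convex_closedBall 0 1)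

end Dual

theorem maximal_convex_subset_eq_extreme_functional_slice_general
    {𝕜 : Type*} [RCLike 𝕜] {E : Type*} [NormedAddCommGroup E] [NormedSpace 𝕜 E]
    [NormedSpace ℝ E] [IsScalarTower ℝ 𝕜 E]
    (F : Set E) (hFsub : F ⊆ Metric.sphere (0 : E) 1) (hFconv : Convex ℝ F)
    (hFmax : ∀ G : Set E, G ⊆ Metric.sphere (0 : E) 1 → Convex ℝ G → F ⊆ G → F = G) :
    ∃ φ : E →L[𝕜] 𝕜,
      φ ∈ Set.extremePoints ℝ (Metric.closedBall (0 : E →L[𝕜] 𝕜) 1) ∧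
      {e : E | φ e = 1} ∩ Metric.sphere (0 : E) 1 = F := by
  have hface := isExtreme_closedBall_inter_setOf_forall_eq_one (𝕜 := 𝕜)
    (hFsub.trans sphere_subset_closedBall)
  obtain ⟨φ, ⟨hφ, hφF⟩, hφext⟩ := hface.exists_mem_extremePoints_closedBall
    (exists_strongDual_mem_closedBall_forall_eq_one hFsub hFconv)
    (WeakDual.isClosed_closedBall_inter_setOf_forall_eq_one F)
  refine ⟨φ, hφext, (hFmax _ inter_subset_right ?_ fun x hx => ⟨hφF x hx, hFsub hx⟩).symm⟩
  exact convex_setOf_apply_eq_one_inter_sphere (mem_closedBall_zero_iff.1 hφ)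

/-- For a maximal convex subset `F` of the unit sphere of a (real or complex) Banach
space `E` there is an extreme point `φ` of the closed unit ball of the dual `E*` with
`φ⁻¹(1) ∩ S(E) = F`. -/
theorem maximal_convex_subset_eq_extreme_functional_slice
    {𝕜 : Type*} [RCLike 𝕜] {E : Type*} [NormedAddCommGroup E] [NormedSpace 𝕜 E]
    [NormedSpace ℝ E] [IsScalarTower ℝ 𝕜 E] [CompleteSpace E]
    (F : Set E) (hFsub : F ⊆ Metric.sphere (0 : E) 1) (hFconv : Convex ℝ F)
    (hFmax : ∀ G : Set E, G ⊆ Metric.sphere (0 : E) 1 → Convex ℝ G → F ⊆ G → F = G) :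
    ∃ φ : E →L[𝕜] 𝕜,
      φ ∈ Set.extremePoints ℝ (Metric.closedBall (0 : E →L[𝕜] 𝕜) 1) ∧
      {e : E | φ e = 1} ∩ Metric.sphere (0 : E) 1 = F :=
  maximal_convex_subset_eq_extreme_functional_slice_general F hFsub hFconv hFmax
end

section
/- Let A be a uniform algebra on a compact Hausdorff space X. A subset F of S(A) is a maximal convex subset of S(A) if and only if there exist a point x ∈ Ch(A) and a unimodular complex number λ ∈ 𝕋 such that F = {f ∈ S(A) : f(x) = λ}. -/
open scoped ComplexConjugate

/-- A peaking function for the set `K` in a (sub)algebra `A` of `C(X, ℂ)`: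
`f ∈ A`, `‖f‖ = 1`, `K = f⁻¹(1)` and `{x : |f(x)| = 1} = f⁻¹(1) = K`. -/
def IsPeakingFunction {X : Type*} [TopologicalSpace X] [CompactSpace X]
    (A : Subalgebra ℂ C(X, ℂ)) (f : C(X, ℂ)) (K : Set X) : Prop :=
  f ∈ A ∧ ‖f‖ = 1 ∧ K = {x | f x = 1} ∧ {x | ‖f x‖ = 1} = K

/-- A peak set for `A`. -/
def IsPeakSet {X : Type*} [TopologicalSpace X] [CompactSpace X]
    (A : Subalgebra ℂ C(X, ℂ)) (K : Set X) : Prop :=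
  ∃ f, IsPeakingFunction A f K

/-- A weak peak set for `A`: an intersection of a nonempty family of peak sets. -/
def IsWeakPeakSet {X : Type*} [TopologicalSpace X] [CompactSpace X]
    (A : Subalgebra ℂ C(X, ℂ)) (K : Set X) : Prop :=
  ∃ S : Set (Set X), S.Nonempty ∧ (∀ E ∈ S, IsPeakSet A E) ∧ K = ⋂₀ S

/-- The Choquet boundary of a uniform algebra: the set of weak peak points. -/
def choquetBdry {X : Type*} [TopologicalSpace X] [CompactSpace X]
    (A : Subalgebra ℂ C(X, ℂ)) : Set X :=
  {x | IsWeakPeakSet A {x}}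

/-- The unit sphere `S(A)` of `A`, as a subset of `C(X, ℂ)`. -/
def uaSphere {X : Type*} [TopologicalSpace X] [CompactSpace X]
    (A : Subalgebra ℂ C(X, ℂ)) : Set C(X, ℂ) :=
  {f | f ∈ A ∧ ‖f‖ = 1}

/-- The set `F_{x,λ} = {f ∈ S(A) : f x = λ}`. -/
def uaSlice {X : Type*} [TopologicalSpace X] [CompactSpace X]
    (A : Subalgebra ℂ C(X, ℂ)) (x : X) (lam : ℂ) : Set C(X, ℂ) :=
  {f | f ∈ uaSphere A ∧ f x = lam}

/-!
Midpoints of elements of a convex subset `F` of `S(A)` again have norm one, and by strict convexity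
of `ℂ` a midpoint is unimodular only where both functions agree and are unimodular; compactness
then gives `x` and `λ` with `f x = λ` for all `f ∈ F`, so a maximal `F` is the slice `F_{x,λ}`.

A slice at a weak peak point `x` is maximal: for `g` in a convex `G ⊇ F_{x,λ}` inside `S(A)` and a
peaking function `p` at `x`, the midpoint of `g` and `λ p` shows that `g = λ` somewhere on each peak
set containing `x`, and these peak sets form a directed family of compact sets with intersection
`{x}`.

If `F_{x,λ}` is maximal, the set `K` where all its elements equal `λ` is a weak peak set, and every
slice at a point of `K` equals `F_{x,λ}`. By Bishop's lemma, a function of `A` that vanishes at one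
point of `K` but not at another can be renormalised to norm one without changing it on `K` beyond a
scalar; rotated into a slice at a point of `K`, it would have to equal `λ` on all of `K`. So
`K = {x}` and `x ∈ Ch(A)`.
-/

section GeometricSeries

variable {E : Type*} [NormedAddCommGroup E] [NormedSpace ℝ E]

theorem hasSum_inv_two_pow_succ : HasSum (fun m : ℕ => (2⁻¹ : ℝ) ^ (m + 1)) 1 := by
  convert hasSum_geometric_two' 1 using 2 with m
  rw [pow_succ, inv_pow]
  ring

theorem norm_tsum_inv_two_pow_succ_smul_le {z : ℕ → E} {c : ℝ} (hz : ∀ m, ‖z m‖ ≤ c) :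
    ‖∑' m, (2⁻¹ : ℝ) ^ (m + 1) • z m‖ ≤ c := by
  refine tsum_of_norm_bounded (by simpa only [one_mul] using hasSum_inv_two_pow_succ.mul_right c)
    fun m => ?_
  rw [norm_smul_of_nonneg (by positivity)]
  exact mul_le_mul_of_nonneg_left (hz m) (pow_nonneg (by norm_num) _)

theorem norm_tsum_inv_two_pow_succ_smul_le_of_le_at {z : ℕ → E} (hz : ∀ m, ‖z m‖ ≤ 1)
    {n : ℕ} {η : ℝ} (hn : ‖z n‖ ≤ η) :
    ‖∑' m, (2⁻¹ : ℝ) ^ (m + 1) • z m‖ ≤ 1 - (1 - η) * 2⁻¹ ^ (n + 1) := by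
  refine tsum_of_norm_bounded
    (hasSum_inv_two_pow_succ.sub ((hasSum_ite_eq n ((2⁻¹ : ℝ) ^ (n + 1))).mul_left (1 - η)))
    fun m => ?_
  rw [norm_smul_of_nonneg (by positivity)]
  split_ifs with hm
  · subst hm; nlinarith [pow_pos (by norm_num : (0 : ℝ) < 2⁻¹) (m + 1)]
  · simpa using mul_le_mul_of_nonneg_left (hz m) (by positivity : (0 : ℝ) ≤ 2⁻¹ ^ (m + 1))

/-- The arithmetic core of Bishop's lemma. If `t` first passes the threshold
`1 - (1 - η) * 2⁻¹ ^ (m + 2)` at `m = k + 1`, the single small term `z (k + 1)` already pushes the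
sum below the `k`-th threshold, which `t` did not pass; if it passes them all, `t * η ≤ 1`. -/
theorem mul_norm_tsum_le_one {z : ℕ → E} {t η : ℝ} (hη : 0 ≤ η) (hη1 : η ≤ 1)
    (htη : t * η ≤ 1) (hz : ∀ m, ‖z m‖ ≤ 1)
    (hzη : ∀ m, 1 ≤ (1 - (1 - η) * 2⁻¹ ^ (m + 2)) * t → ‖z m‖ ≤ η) :
    t * ‖∑' m, (2⁻¹ : ℝ) ^ (m + 1) • z m‖ ≤ 1 := by
  set r : ℕ → ℝ := fun m => 1 - (1 - η) * 2⁻¹ ^ (m + 2)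
  rcases le_or_gt t 1 with ht1 | ht1
  · exact mul_le_one₀ ht1 (norm_nonneg _) (norm_tsum_inv_two_pow_succ_smul_le hz)
  have hex : ∃ m, 1 ≤ r m * t := by
    obtain ⟨m, hm⟩ := exists_pow_lt_of_lt_one (sub_pos.2 (inv_lt_one_of_one_lt₀ ht1))
      (by norm_num : (2⁻¹ : ℝ) < 1)
    refine ⟨m, ?_⟩
    have : (1 - η) * (2⁻¹ : ℝ) ^ (m + 2) ≤ 2⁻¹ ^ m :=
      (mul_le_of_le_one_left (by positivity) (by linarith)).trans
        (pow_le_pow_of_le_one (by norm_num) (by norm_num) (by omega))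
    have hrm : t⁻¹ ≤ r m := by simp only [r]; linarith
    simpa [mul_comm] using (inv_le_iff_one_le_mul₀ (by linarith : (0 : ℝ) < t)).1 hrm
  have hr_mono : Monotone r := fun m k hmk =>
    sub_le_sub_left (mul_le_mul_of_nonneg_left
      (pow_le_pow_of_le_one (by norm_num) (by norm_num) (by omega)) (by linarith)) 1
  rcases hn : Nat.find hex with _ | k
  · have hall : ∀ m, ‖z m‖ ≤ η := fun m =>
      hzη m ((hn ▸ Nat.find_spec hex).trans (by gcongr; exact hr_mono (Nat.zero_le m)))
    calc t * ‖∑' m, (2⁻¹ : ℝ) ^ (m + 1) • z m‖ ≤ t * η := by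
          gcongr; exact norm_tsum_inv_two_pow_succ_smul_le hall
      _ ≤ 1 := htη
  · have hk : r k * t < 1 := not_le.1 (Nat.find_min hex (by omega))
    have hzk : ‖z (k + 1)‖ ≤ η := hzη _ (hn ▸ Nat.find_spec hex)
    calc t * ‖∑' m, (2⁻¹ : ℝ) ^ (m + 1) • z m‖ ≤ t * r k := by
          gcongr; exact norm_tsum_inv_two_pow_succ_smul_le_of_le_at hz hzk
      _ ≤ 1 := by linarith

end GeometricSeries

section StrictConvex

variable {E : Type*} [NormedAddCommGroup E] [NormedSpace ℝ E] [StrictConvexSpace ℝ E]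

theorem eq_and_norm_eq_one_of_norm_midpoint_eq_one {x y : E} (hx : ‖x‖ ≤ 1) (hy : ‖y‖ ≤ 1)
    (h : ‖midpoint ℝ x y‖ = 1) : x = y ∧ ‖x‖ = 1 := by
  have hxy : ‖x + y‖ = 2 := by
    rw [midpoint_eq_smul_add, norm_smul_of_nonneg (by norm_num)] at h
    simp only [invOf_eq_inv] at h
    linarith
  have hx1 : ‖x‖ = 1 := by linarith [norm_add_le x y]
  have hy1 : ‖y‖ = 1 := by linarith [norm_add_le x y]
  exact ⟨eq_of_norm_eq_of_norm_add_eq (hx1.trans hy1.symm) (by linarith), hx1⟩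

theorem eq_of_midpoint_eq {x y z : E} (hx : ‖x‖ ≤ 1) (hy : ‖y‖ ≤ 1) (hz : ‖z‖ = 1)
    (h : midpoint ℝ x y = z) : x = z ∧ y = z := by
  obtain ⟨rfl, -⟩ := eq_and_norm_eq_one_of_norm_midpoint_eq_one hx hy (h ▸ hz)
  rw [midpoint_self] at h
  exact ⟨h, h⟩

end StrictConvex

namespace ContinuousMap

variable {X E : Type*} [TopologicalSpace X]

theorem midpoint_apply [NormedAddCommGroup E] [NormedSpace ℝ E] (f g : C(X, E)) (x : X) :
    midpoint ℝ f g x = midpoint ℝ (f x) (g x) := by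
  simp [midpoint_eq_smul_add]

theorem exists_norm_apply_eq_norm [CompactSpace X] [Nonempty X] [NormedAddCommGroup E] (f : C(X, E)) :
    ∃ x, ‖f x‖ = ‖f‖ := by
  obtain ⟨x, -, hx⟩ :=
    isCompact_univ.exists_isMaxOn Set.univ_nonempty f.continuous.norm.continuousOn
  exact ⟨x, le_antisymm (f.norm_coe_le_norm x)
    ((f.norm_le (norm_nonneg _)).2 fun y => hx (Set.mem_univ y))⟩

end ContinuousMap

theorem Subalgebra.midpoint_mem {X : Type*} [TopologicalSpace X] {A : Subalgebra ℂ C(X, ℂ)}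
    {f g : C(X, ℂ)} (hf : f ∈ A) (hg : g ∈ A) : midpoint ℝ f g ∈ A :=
  (A.toSubmodule.restrictScalars ℝ).convex.midpoint_mem hf hg

theorem nonempty_iInter_inter_of_directed_isClosed {X ι : Type*} [TopologicalSpace X]
    [CompactSpace X] [Nonempty ι] {E : ι → Set X} (hdir : Directed (· ⊇ ·) E)
    (hE : ∀ i, IsClosed (E i)) {Z : Set X} (hZ : IsClosed Z) (hne : ∀ i, (E i ∩ Z).Nonempty) :
    ((⋂ i, E i) ∩ Z).Nonempty := by
  rw [Set.iInter_inter]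
  refine IsCompact.nonempty_iInter_of_directed_nonempty_isCompact_isClosed _ ?_ hne
    (fun i => ((hE i).inter hZ).isCompact) fun i => (hE i).inter hZ
  intro i j
  obtain ⟨k, hki, hkj⟩ := hdir i j
  exact ⟨k, Set.inter_subset_inter_left Z hki, Set.inter_subset_inter_left Z hkj⟩

section UniformAlgebra

variable {X : Type*} [TopologicalSpace X] [CompactSpace X] {A : Subalgebra ℂ C(X, ℂ)}

theorem norm_midpoint_le_one {f g : C(X, ℂ)} (hf : ‖f‖ ≤ 1) (hg : ‖g‖ ≤ 1) :
    ‖midpoint ℝ f g‖ ≤ 1 := by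
  simpa using (convex_closedBall (0 : C(X, ℂ)) 1).midpoint_mem
    (mem_closedBall_zero_iff.2 hf) (mem_closedBall_zero_iff.2 hg)

theorem IsPeakingFunction.norm_apply_le_one {p : C(X, ℂ)} {E : Set X}
    (hp : IsPeakingFunction A p E) (w : X) : ‖p w‖ ≤ 1 :=
  hp.2.1 ▸ p.norm_coe_le_norm w

theorem IsPeakingFunction.apply_eq_one_iff {p : C(X, ℂ)} {E : Set X}
    (hp : IsPeakingFunction A p E) {w : X} : p w = 1 ↔ w ∈ E := by
  rw [hp.2.2.1]; rfl

theorem IsPeakingFunction.mem_of_norm_eq_one {p : C(X, ℂ)} {E : Set X}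
    (hp : IsPeakingFunction A p E) {w : X} (hw : ‖p w‖ = 1) : w ∈ E := by
  rw [← hp.2.2.2]; exact hw

/-- By strict convexity of `ℂ`, the midpoint is unimodular exactly where `p₁` and `p₂` agree and
are unimodular. -/
theorem isPeakingFunction_midpoint {p₁ p₂ : C(X, ℂ)} (h₁ : p₁ ∈ A) (h₂ : p₂ ∈ A)
    (hp₁ : ‖p₁‖ ≤ 1) (hp₂ : ‖p₂‖ ≤ 1) (hpeak : ∀ w, ‖p₁ w‖ = 1 → p₁ w = 1) {x : X}
    (hx₁ : p₁ x = 1) (hx₂ : p₂ x = 1) :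
    IsPeakingFunction A (midpoint ℝ p₁ p₂) {w | p₁ w = 1 ∧ p₂ w = 1} := by
  have hle : ∀ w, ‖p₁ w‖ ≤ 1 ∧ ‖p₂ w‖ ≤ 1 := fun w =>
    ⟨(p₁.norm_coe_le_norm w).trans hp₁, (p₂.norm_coe_le_norm w).trans hp₂⟩
  have hone : ∀ w, p₁ w = 1 → p₂ w = 1 → midpoint ℝ p₁ p₂ w = 1 := fun w e₁ e₂ => by
    rw [ContinuousMap.midpoint_apply, e₁, e₂, midpoint_self]
  have hq : ‖midpoint ℝ p₁ p₂‖ = 1 := le_antisymm (norm_midpoint_le_one hp₁ hp₂)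
    (by simpa [hone x hx₁ hx₂] using (midpoint ℝ p₁ p₂).norm_coe_le_norm x)
  refine ⟨Subalgebra.midpoint_mem h₁ h₂, hq, ?_, ?_⟩ <;> ext w <;>
    simp only [Set.mem_ofPred_eq, ContinuousMap.midpoint_apply]
  · refine ⟨fun ⟨e₁, e₂⟩ => ?_, fun h => eq_of_midpoint_eq (hle w).1 (hle w).2 norm_one h⟩
    rw [e₁, e₂, midpoint_self]
  · refine ⟨fun h => ?_, fun ⟨e₁, e₂⟩ => by rw [e₁, e₂, midpoint_self, norm_one]⟩
    obtain ⟨e, h1⟩ := eq_and_norm_eq_one_of_norm_midpoint_eq_one (hle w).1 (hle w).2 h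
    exact ⟨hpeak w h1, e ▸ hpeak w h1⟩

theorem isPeakSet_setOf_apply_eq {f : C(X, ℂ)} (hf : f ∈ A) (hf1 : ‖f‖ ≤ 1) {lam : ℂ}
    (hlam : ‖lam‖ = 1) {x : X} (hx : f x = lam) : IsPeakSet A {w | f w = lam} := by
  have hlam0 : lam ≠ 0 := norm_ne_zero_iff.1 (by rw [hlam]; exact one_ne_zero)
  have key := isPeakingFunction_midpoint (one_mem A) (A.smul_mem hf lam⁻¹)
    ((ContinuousMap.norm_le _ zero_le_one).2 fun _ => by simp)
    (by rw [norm_smul, norm_inv, hlam, inv_one, one_mul]; exact hf1) (fun _ _ => rfl)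
    (x := x) rfl (by simp [hx, hlam0])
  have hset : {w | (1 : C(X, ℂ)) w = 1 ∧ (lam⁻¹ • f) w = 1} = {w | f w = lam} := by
    ext w
    simp [inv_mul_eq_one₀ hlam0, eq_comm]
  exact ⟨_, hset ▸ key⟩

theorem IsPeakSet.isClosed {E : Set X} (hE : IsPeakSet A E) : IsClosed E := by
  obtain ⟨p, -, -, rfl, -⟩ := hE
  exact isClosed_eq p.continuous continuous_const

theorem IsPeakSet.inter {E₁ E₂ : Set X} (h₁ : IsPeakSet A E₁) (h₂ : IsPeakSet A E₂) {x : X}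
    (hx : x ∈ E₁ ∩ E₂) : IsPeakSet A (E₁ ∩ E₂) := by
  obtain ⟨p₁, hp₁⟩ := h₁
  obtain ⟨p₂, hp₂⟩ := h₂
  have key := isPeakingFunction_midpoint hp₁.1 hp₂.1 hp₁.2.1.le hp₂.2.1.le
    (fun w hw => hp₁.apply_eq_one_iff.2 (hp₁.mem_of_norm_eq_one hw))
    (hp₁.apply_eq_one_iff.2 hx.1) (hp₂.apply_eq_one_iff.2 hx.2)
  have hset : {w | p₁ w = 1 ∧ p₂ w = 1} = E₁ ∩ E₂ := by
    ext w
    simp only [Set.mem_inter_iff, Set.mem_ofPred_eq, hp₁.apply_eq_one_iff, hp₂.apply_eq_one_iff]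
  exact ⟨_, hset ▸ key⟩

/-- The approximation property of p-sets (weak peak sets) that Bishop's lemma uses. -/
def IsPSet (A : Subalgebra ℂ C(X, ℂ)) (K : Set X) : Prop :=
  ∀ D : Set X, IsClosed D → Disjoint D K → ∀ η : ℝ, 0 < η →
    ∃ h ∈ A, ‖h‖ ≤ 1 ∧ (∀ w ∈ K, h w = 1) ∧ ∀ w ∈ D, ‖h w‖ ≤ η

theorem IsPeakSet.isPSet {E : Set X} (hE : IsPeakSet A E) : IsPSet A E := by
  obtain ⟨q, hq⟩ := hE
  intro D hD hDE η hη
  obtain ⟨k, hk⟩ : ∃ k : ℕ, ∀ w ∈ D, ‖q w‖ ^ k ≤ η := by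
    rcases D.eq_empty_or_nonempty with rfl | hDne
    · exact ⟨0, by simp⟩
    obtain ⟨w₀, hw₀, hmax⟩ := hD.isCompact.exists_isMaxOn hDne q.continuous.norm.continuousOn
    have hlt : ‖q w₀‖ < 1 := (hq.norm_apply_le_one w₀).lt_of_ne fun h =>
      Set.disjoint_left.1 hDE hw₀ (hq.mem_of_norm_eq_one h)
    obtain ⟨k, hk⟩ := exists_pow_lt_of_lt_one hη hlt
    exact ⟨k, fun w hw => (pow_le_pow_left₀ (norm_nonneg _) (hmax hw) k).trans hk.le⟩
  refine ⟨q ^ k, pow_mem hq.1 k, (ContinuousMap.norm_le _ zero_le_one).2 fun w => ?_,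
    fun w hw => ?_, fun w hw => ?_⟩ <;> rw [ContinuousMap.pow_apply]
  · rw [norm_pow]; exact pow_le_one₀ (norm_nonneg _) (hq.norm_apply_le_one w)
  · rw [hq.apply_eq_one_iff.2 hw, one_pow]
  · rw [norm_pow]; exact hk w hw

theorem isPSet_iInter {ι : Type*} [Nonempty ι] {E : ι → Set X} (hdir : Directed (· ⊇ ·) E)
    (hE : ∀ i, IsClosed (E i)) (hp : ∀ i, IsPSet A (E i)) : IsPSet A (⋂ i, E i) := by
  intro D hD hDK η hη
  obtain ⟨i, hi⟩ : ∃ i, Disjoint D (E i) := by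
    by_contra! h
    obtain ⟨y, hyE, hyD⟩ := nonempty_iInter_inter_of_directed_isClosed hdir hE hD fun i => by
      obtain ⟨y, hyD, hyE⟩ := Set.not_disjoint_iff.1 (h i)
      exact ⟨y, hyE, hyD⟩
    exact Set.disjoint_left.1 hDK hyD hyE
  obtain ⟨h, hhA, hh1, hhK, hhD⟩ := hp i D hD hi η hη
  exact ⟨h, hhA, hh1, fun w hw => hhK w (Set.mem_iInter.1 hw i), hhD⟩

/-- Bishop's lemma. -/
theorem IsPSet.exists_mul_norm_le_one (hA : IsClosed (A : Set C(X, ℂ))) {K : Set X}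
    (hK : IsPSet A K) {u : C(X, ℂ)} (huK : ∀ w ∈ K, ‖u w‖ ≤ 1) :
    ∃ g ∈ A, (∀ w ∈ K, g w = 1) ∧ ∀ w, ‖u w‖ * ‖g w‖ ≤ 1 := by
  set η : ℝ := (‖u‖ + 2)⁻¹
  have hη : 0 < η := by positivity
  have hη1 : η < 1 := inv_lt_one_of_one_lt₀ (by linarith [norm_nonneg u])
  set D : ℕ → Set X := fun m => {w | 1 ≤ (1 - (1 - η) * 2⁻¹ ^ (m + 2)) * ‖u w‖}
  have hD : ∀ m, IsClosed (D m) := fun m =>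
    isClosed_le continuous_const (continuous_const.mul u.continuous.norm)
  have hDK : ∀ m, Disjoint (D m) K := fun m => Set.disjoint_left.2 fun w hwD hwK => by
    have hε : 0 < (1 - η) * (2⁻¹ : ℝ) ^ (m + 2) := mul_pos (by linarith) (by positivity)
    have hwD : 1 ≤ (1 - (1 - η) * 2⁻¹ ^ (m + 2)) * ‖u w‖ := hwD
    nlinarith [huK w hwK, mul_nonneg hε.le (norm_nonneg (u w))]
  choose h hhA hh1 hhK hhD using fun m => hK (D m) (hD m) (hDK m) η hη
  have hs : Summable fun m => (2⁻¹ : ℝ) ^ (m + 1) • h m :=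
    hasSum_inv_two_pow_succ.summable.of_norm_bounded fun m => by
      rw [norm_smul_of_nonneg (by positivity)]
      exact mul_le_of_le_one_right (by positivity) (hh1 m)
  have happly : ∀ w, (∑' m, (2⁻¹ : ℝ) ^ (m + 1) • h m) w = ∑' m, (2⁻¹ : ℝ) ^ (m + 1) • h m w :=
    fun w => (ContinuousMap.tsum_apply hs w).symm
  refine ⟨∑' m, (2⁻¹ : ℝ) ^ (m + 1) • h m, ?_, fun w hw => ?_, fun w => ?_⟩
  · exact hA.mem_of_tendsto hs.hasSum.tendsto_sum_nat (Filter.Eventually.of_forall fun n =>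
      A.sum_mem fun m _ => A.toSubmodule.smul_of_tower_mem _ (hhA m))
  · simp only [happly, hhK _ w hw]
    simpa using (hasSum_inv_two_pow_succ.smul_const (1 : ℂ)).tsum_eq
  · rw [happly]
    refine mul_norm_tsum_le_one hη.le hη1.le ?_ (fun m => ((h m).norm_coe_le_norm w).trans (hh1 m))
      fun m hm => hhD m w hm
    calc ‖u w‖ * η ≤ ‖u‖ * η := by gcongr; exact u.norm_coe_le_norm w
      _ ≤ 1 := by rw [mul_inv_le_iff₀ (by positivity)]; linarith

theorem IsPSet.exists_norm_eq_one (hA : IsClosed (A : Set C(X, ℂ))) {K : Set X}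
    (hKc : IsClosed K) (hK : IsPSet A K) {u : C(X, ℂ)} (hu : u ∈ A) {z : X} (hz : z ∈ K)
    (huz : u z ≠ 0) :
    ∃ φ ∈ A, ‖φ‖ = 1 ∧ (∃ w ∈ K, ‖φ w‖ = 1) ∧ ∃ c : ℂ, ∀ y ∈ K, φ y = c * u y := by
  obtain ⟨w, hwK, hmax⟩ := hKc.isCompact.exists_isMaxOn ⟨z, hz⟩ u.continuous.norm.continuousOn
  have hw : 0 < ‖u w‖ := (norm_pos_iff.2 huz).trans_le (hmax hz)
  set c : ℂ := ((‖u w‖ : ℝ) : ℂ)⁻¹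
  have hcu : ∀ y, ‖c * u y‖ = ‖u y‖ / ‖u w‖ := fun y => by
    rw [norm_mul, norm_inv, Complex.norm_real, Real.norm_of_nonneg hw.le, inv_mul_eq_div]
  obtain ⟨g, hgA, hgK, hg⟩ := hK.exists_mul_norm_le_one hA (u := c • u) fun y hy => by
    rw [ContinuousMap.smul_apply, smul_eq_mul, hcu]
    exact div_le_one_of_le₀ (hmax hy) hw.le
  have hφK : ∀ y ∈ K, (c • u * g) y = c * u y := fun y hy => by simp [hgK y hy]
  have hφw : ‖(c • u * g) w‖ = 1 := by rw [hφK w hwK, hcu, div_self hw.ne']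
  refine ⟨c • u * g, A.mul_mem (A.smul_mem hu c) hgA, le_antisymm ?_ ?_, ⟨w, hwK, hφw⟩, c, hφK⟩
  · exact (ContinuousMap.norm_le _ zero_le_one).2 fun y => by simpa [norm_mul, mul_assoc] using hg y
  · exact hφw ▸ (c • u * g).norm_coe_le_norm w

theorem div_smul_mem_uaSlice {φ : C(X, ℂ)} (hφ : φ ∈ uaSphere A) {w : X} (hw : ‖φ w‖ = 1)
    {lam : ℂ} (hlam : ‖lam‖ = 1) : (lam / φ w) • φ ∈ uaSlice A w lam := by
  have hφw : φ w ≠ 0 := norm_ne_zero_iff.1 (by rw [hw]; exact one_ne_zero)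
  refine ⟨⟨A.smul_mem hφ.1 _, ?_⟩, ?_⟩
  · rw [norm_smul, norm_div, hlam, hw, div_one, one_mul, hφ.2]
  · rw [ContinuousMap.smul_apply, smul_eq_mul, div_mul_cancel₀ _ hφw]

/-- Bishop's lemma applied to a function separating two points of `K` gives a norm-one function
that is unimodular somewhere on `K` and vanishes at one of the two points. -/
theorem IsPSet.subsingleton (hA : IsClosed (A : Set C(X, ℂ)))
    (hAsep : ∀ x₁ x₂ : X, x₁ ≠ x₂ → ∃ f ∈ A, f x₁ ≠ f x₂) {K : Set X} (hKc : IsClosed K)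
    (hK : IsPSet A K) {lam : ℂ} (hlam : ‖lam‖ = 1)
    (hslice : ∀ w ∈ K, ∀ f ∈ uaSlice A w lam, ∀ y ∈ K, f y = lam) : K.Subsingleton := by
  intro x hx y hy
  by_contra hxy
  obtain ⟨v, hv, hvxy⟩ := hAsep x y hxy
  set u := v - algebraMap ℂ C(X, ℂ) (v y)
  have huA : u ∈ A := A.sub_mem hv (A.algebraMap_mem _)
  have huy : u y = 0 := by simp [u]
  have hux : u x ≠ 0 := by simpa [u, sub_eq_zero] using hvxy
  obtain ⟨φ, hφA, hφ1, ⟨w, hwK, hφw⟩, c, hφK⟩ := hK.exists_norm_eq_one hA hKc huA hx hux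
  have := hslice w hwK _ (div_smul_mem_uaSlice ⟨hφA, hφ1⟩ hφw hlam) y hy
  rw [ContinuousMap.smul_apply, hφK y hy, huy, mul_zero, smul_zero] at this
  rw [← this, norm_zero] at hlam
  exact zero_ne_one hlam

theorem convex_uaSlice (x : X) {lam : ℂ} (hlam : ‖lam‖ = 1) : Convex ℝ (uaSlice A x lam) := by
  rintro f ⟨⟨hfA, hf1⟩, hfx⟩ g ⟨⟨hgA, hg1⟩, hgx⟩ a b ha hb hab
  have hab' : (a : ℂ) + b = 1 := by exact_mod_cast hab
  have hx : (a • f + b • g) x = lam := by simp [hfx, hgx, ← add_mul, hab']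
  have hle : ‖a • f + b • g‖ ≤ 1 := by
    simpa using (convex_closedBall (0 : C(X, ℂ)) 1) (mem_closedBall_zero_iff.2 hf1.le)
      (mem_closedBall_zero_iff.2 hg1.le) ha hb hab
  refine ⟨⟨A.add_mem (A.toSubmodule.smul_of_tower_mem a hfA)
    (A.toSubmodule.smul_of_tower_mem b hgA), le_antisymm hle ?_⟩, hx⟩
  simpa [hx, hlam] using (a • f + b • g).norm_coe_le_norm x

theorem exists_forall_apply_eq_of_convex [Nonempty X] {F : Set C(X, ℂ)}
    (hFS : F ⊆ uaSphere A) (hF : Convex ℝ F) (hne : F.Nonempty) :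
    ∃ x lam, ‖lam‖ = 1 ∧ ∀ f ∈ F, f x = lam := by
  obtain ⟨f₀, hf₀⟩ := hne
  have hmid : ∀ f ∈ F, ∀ g ∈ F, ∀ y, ‖midpoint ℝ f g y‖ = 1 → f y = g y ∧ ‖f y‖ = 1 :=
    fun f hf g hg y h => eq_and_norm_eq_one_of_norm_midpoint_eq_one
      ((hFS hf).2 ▸ f.norm_coe_le_norm y) ((hFS hg).2 ▸ g.norm_coe_le_norm y)
      (by rwa [← ContinuousMap.midpoint_apply])
  have hdir : Directed (· ⊇ ·) fun f : F => {y | ‖f.1 y‖ = 1} := by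
    rintro ⟨f, hf⟩ ⟨g, hg⟩
    refine ⟨⟨_, hF.midpoint_mem hf hg⟩, fun y hy => (hmid f hf g hg y hy).2, fun y hy => ?_⟩
    obtain ⟨e, h⟩ := hmid f hf g hg y hy
    exact (e ▸ h : ‖g y‖ = 1)
  have : Nonempty F := ⟨⟨f₀, hf₀⟩⟩
  obtain ⟨x, hx, -⟩ := nonempty_iInter_inter_of_directed_isClosed hdir
    (fun f => isClosed_eq f.1.continuous.norm continuous_const) isClosed_univ fun f => by
      obtain ⟨y, hy⟩ := f.1.exists_norm_apply_eq_norm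
      exact ⟨y, hy.trans (hFS f.2).2, trivial⟩
  exact ⟨x, f₀ x, Set.mem_iInter.1 hx ⟨f₀, hf₀⟩, fun f hf =>
    (hmid f hf f₀ hf₀ x (Set.mem_iInter.1 hx ⟨_, hF.midpoint_mem hf hf₀⟩)).1⟩

/-- For a peaking function `p` at `x`, the midpoint of `g` and `lam • p` lies on the sphere, so it
is unimodular at some `y`; strict convexity of `ℂ` forces `p y = 1` and `g y = lam`. -/
theorem inter_setOf_apply_eq_nonempty {x : X} {lam : ℂ} (hlam : ‖lam‖ = 1)
    {G : Set C(X, ℂ)} (hGS : G ⊆ uaSphere A) (hG : Convex ℝ G) (hxG : uaSlice A x lam ⊆ G)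
    {g : C(X, ℂ)} (hg : g ∈ G) {E : Set X} (hE : IsPeakSet A E) (hxE : x ∈ E) :
    (E ∩ {y | g y = lam}).Nonempty := by
  obtain ⟨p, hp⟩ := hE
  have hpx : p x = 1 := hp.apply_eq_one_iff.2 hxE
  have hlp : (lam / p x) • p ∈ G :=
    hxG (div_smul_mem_uaSlice ⟨hp.1, hp.2.1⟩ (by rw [hpx, norm_one]) hlam)
  rw [hpx, div_one] at hlp
  have : Nonempty X := ⟨x⟩
  obtain ⟨y, hy⟩ := (midpoint ℝ g (lam • p)).exists_norm_apply_eq_norm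
  rw [(hGS (hG.midpoint_mem hg hlp)).2, ContinuousMap.midpoint_apply] at hy
  obtain ⟨e, h1⟩ := eq_and_norm_eq_one_of_norm_midpoint_eq_one
    ((hGS hg).2 ▸ g.norm_coe_le_norm y) ((hGS hlp).2 ▸ (lam • p).norm_coe_le_norm y) hy
  have hyE : y ∈ E := hp.mem_of_norm_eq_one (by simpa [e, norm_smul, hlam] using h1)
  refine ⟨y, hyE, ?_⟩
  rw [Set.mem_ofPred_eq, e, ContinuousMap.smul_apply, hp.apply_eq_one_iff.2 hyE, smul_eq_mul,
    mul_one]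

theorem subset_uaSlice_of_mem_choquetBdry {x : X} (hx : x ∈ choquetBdry A) {lam : ℂ}
    (hlam : ‖lam‖ = 1) {G : Set C(X, ℂ)} (hGS : G ⊆ uaSphere A) (hG : Convex ℝ G)
    (hxG : uaSlice A x lam ⊆ G) : G ⊆ uaSlice A x lam := by
  obtain ⟨S, ⟨E₀, hE₀⟩, hSpeak, hxS⟩ := hx
  have hxmem : ∀ E ∈ S, x ∈ E := Set.mem_sInter.1 (hxS ▸ Set.mem_singleton x)
  have : Nonempty {E : Set X // IsPeakSet A E ∧ x ∈ E} :=
    ⟨⟨E₀, hSpeak E₀ hE₀, hxmem E₀ hE₀⟩⟩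
  intro g hg
  obtain ⟨y, hy, hgy⟩ := nonempty_iInter_inter_of_directed_isClosed
    (E := fun E : {E : Set X // IsPeakSet A E ∧ x ∈ E} => E.1)
    (fun E E' => ⟨⟨_, E.2.1.inter E'.2.1 ⟨E.2.2, E'.2.2⟩, E.2.2, E'.2.2⟩,
      Set.inter_subset_left, Set.inter_subset_right⟩)
    (fun E => E.2.1.isClosed) (isClosed_eq g.continuous continuous_const)
    fun E => inter_setOf_apply_eq_nonempty hlam hGS hG hxG hg E.2.1 E.2.2
  have hyx : y ∈ ({x} : Set X) :=
    hxS ▸ Set.mem_sInter.2 fun E hE => Set.mem_iInter.1 hy ⟨E, hSpeak E hE, hxmem E hE⟩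
  rw [Set.mem_singleton_iff.1 hyx] at hgy
  exact ⟨hGS hg, hgy⟩

theorem mem_choquetBdry_of_forall_uaSlice_subset (hA : IsClosed (A : Set C(X, ℂ)))
    (hAsep : ∀ x₁ x₂ : X, x₁ ≠ x₂ → ∃ f ∈ A, f x₁ ≠ f x₂) {x : X} {lam : ℂ} (hlam : ‖lam‖ = 1)
    (hmax : ∀ y, (∀ f ∈ uaSlice A x lam, f y = lam) → uaSlice A y lam ⊆ uaSlice A x lam) :
    x ∈ choquetBdry A := by
  have : Nonempty X := ⟨x⟩
  set S := uaSlice A x lam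
  have hS : ∀ f : S, IsPeakSet A {y | f.1 y = lam} := fun f =>
    isPeakSet_setOf_apply_eq f.2.1.1 f.2.1.2.le hlam f.2.2
  have : Nonempty S := ⟨⟨lam • 1, by
    simpa using div_smul_mem_uaSlice (A := A) (w := x) ⟨one_mem A, norm_one⟩ (by simp) hlam⟩⟩
  have hdir : Directed (· ⊇ ·) fun f : S => {y | f.1 y = lam} := by
    rintro ⟨f, hf⟩ ⟨g, hg⟩
    have key : ∀ y, midpoint ℝ f g y = lam → f y = lam ∧ g y = lam := fun y hy =>
      eq_of_midpoint_eq (hf.1.2 ▸ f.norm_coe_le_norm y) (hg.1.2 ▸ g.norm_coe_le_norm y) hlam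
        (by rwa [← ContinuousMap.midpoint_apply])
    exact ⟨⟨_, (convex_uaSlice x hlam).midpoint_mem hf hg⟩, fun y hy => (key y hy).1,
      fun y hy => (key y hy).2⟩
  have hKx : ⋂ f : S, {y | f.1 y = lam} = {x} := by
    refine Set.Subsingleton.eq_singleton_of_mem ?_ (Set.mem_iInter.2 fun f => f.2.2)
    refine (isPSet_iInter hdir (fun f => (hS f).isClosed) fun f => (hS f).isPSet).subsingleton
      hA hAsep (isClosed_iInter fun f => (hS f).isClosed) hlam fun w hw f hf y hy => ?_
    exact Set.mem_iInter.1 hy ⟨f, hmax w (fun f' hf' => Set.mem_iInter.1 hw ⟨f', hf'⟩) hf⟩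
  exact ⟨Set.range fun f : S => {y | f.1 y = lam}, Set.range_nonempty _,
    Set.forall_mem_range.2 hS, by rw [Set.sInter_range, hKx]⟩

end UniformAlgebra

theorem maximal_convex_subset_iff_slice_general
    {X : Type*} [TopologicalSpace X] [CompactSpace X] [Nonempty X]
    (A : Subalgebra ℂ C(X, ℂ)) (hA : IsClosed (A : Set C(X, ℂ)))
    (hAsep : ∀ x₁ x₂ : X, x₁ ≠ x₂ → ∃ f ∈ A, f x₁ ≠ f x₂)
    (F : Set C(X, ℂ)) :
    (F ⊆ uaSphere A ∧ Convex ℝ F ∧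
        (∀ G : Set C(X, ℂ), G ⊆ uaSphere A → Convex ℝ G → F ⊆ G → F = G)) ↔
      ∃ x ∈ choquetBdry A, ∃ lam : ℂ, ‖lam‖ = 1 ∧ F = uaSlice A x lam := by
  constructor
  · rintro ⟨hFS, hF, hmax⟩
    have hne : F.Nonempty := by
      rcases F.eq_empty_or_nonempty with rfl | hne
      · exact absurd (hmax {1} (Set.singleton_subset_iff.2 ⟨one_mem A, norm_one⟩)
          (convex_singleton 1) (Set.empty_subset _)) (Set.singleton_ne_empty 1).symm
      · exact hne
    obtain ⟨x, lam, hlam, hFx⟩ := exists_forall_apply_eq_of_convex hFS hF hne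
    obtain rfl : F = uaSlice A x lam :=
      hmax _ (fun _ hf => hf.1) (convex_uaSlice x hlam) fun f hf => ⟨hFS hf, hFx f hf⟩
    have hslice : ∀ y, (∀ f ∈ uaSlice A x lam, f y = lam) → uaSlice A y lam ⊆ uaSlice A x lam :=
      fun y hy => (hmax _ (fun _ hf => hf.1) (convex_uaSlice y hlam) fun f hf => ⟨hf.1, hy f hf⟩).ge
    exact ⟨x, mem_choquetBdry_of_forall_uaSlice_subset hA hAsep hlam hslice, lam, hlam, rfl⟩
  · rintro ⟨x, hx, lam, hlam, rfl⟩
    exact ⟨fun _ hf => hf.1, convex_uaSlice x hlam, fun G hGS hG hxG =>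
      hxG.antisymm (subset_uaSlice_of_mem_choquetBdry hx hlam hGS hG hxG)⟩

/-- A subset `F` of the unit sphere of a uniform algebra `A` is a maximal convex subset
of `S(A)` iff `F = {f ∈ S(A) : f x = λ}` for some Choquet boundary point `x` and some
unimodular `λ`. -/
theorem maximal_convex_subset_iff_slice
    {X : Type*} [TopologicalSpace X] [CompactSpace X] [T2Space X] [Nonempty X]
    (A : Subalgebra ℂ C(X, ℂ)) (hA : IsClosed (A : Set C(X, ℂ)))
    (hAsep : ∀ x₁ x₂ : X, x₁ ≠ x₂ → ∃ f ∈ A, f x₁ ≠ f x₂)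
    (F : Set C(X, ℂ)) :
    (F ⊆ uaSphere A ∧ Convex ℝ F ∧
        (∀ G : Set C(X, ℂ), G ⊆ uaSphere A → Convex ℝ G → F ⊆ G → F = G)) ↔
      ∃ x ∈ choquetBdry A, ∃ lam : ℂ, ‖lam‖ = 1 ∧ F = uaSlice A x lam :=
  maximal_convex_subset_iff_slice_general A hA hAsep F
end

section
/- Let A be a uniform algebra on a compact Hausdorff space X and let y₁, y₂ ∈ Ch(A) be distinct points. Then for any pair of unimodular complex numbers μ₁, μ₂ ∈ 𝕋 there exists g ∈ S(A) such that g(y₁) = μ₁ and g(y₂) = μ₂. -/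
open scoped ComplexConjugate

/-!
Peaking functions at the weak peak points `y₁`, `y₂`, small outside disjoint neighbourhoods of
them, give for every closed set `C` avoiding `y₁, y₂` and every `η > 0` some `h ∈ A` with
`h yᵢ = μᵢ`, `‖h‖ ≤ 1 + η` and `|h| ≤ η` on `C` (the values at `y₁, y₂` are made exact by
adding a bounded correction). If `g ∈ A` takes the values `μᵢ` and `‖g‖ ≤ 1 + ε`, moving `g` by
`ε / 2` towards such an `h`, chosen small on `{|g| ≥ 1 + ε / 4}`, yields `g'` with the same
values, `‖g'‖ ≤ 1 + ε / 2` and `‖g' - g‖ ≤ 2ε`. Iterating gives a Cauchy sequence whose limit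
in the closed algebra `A` has norm exactly `1`.
-/

open Filter Topology

theorem exists_mem_le_of_forall_halve_excess {α : Type*} [PseudoMetricSpace α] [CompleteSpace α]
    {S : Set α} (hS : IsClosed S) {f : α → ℝ} (hf : Continuous f) {c ε₀ K : ℝ}
    {x₀ : α} (hx₀ : x₀ ∈ S) (hfx₀ : f x₀ ≤ c + ε₀)
    (hstep : ∀ ε, 0 < ε → ε ≤ ε₀ → ∀ x ∈ S, f x ≤ c + ε →
      ∃ y ∈ S, f y ≤ c + ε / 2 ∧ dist y x ≤ K * ε) :
    ∃ x ∈ S, f x ≤ c := by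
  rcases le_or_gt ε₀ 0 with hε₀ | hε₀
  · exact ⟨x₀, hx₀, by linarith⟩
  set P : ℕ → α → Prop := fun n x => x ∈ S ∧ f x ≤ c + ε₀ * (1 / 2) ^ n
  have hnext_exists : ∀ n x, ∃ y, P n x → P (n + 1) y ∧ dist y x ≤ K * ε₀ * (1 / 2) ^ n := by
    intro n x
    by_cases hx : P n x
    · have hεn : ε₀ * (1 / 2) ^ n ≤ ε₀ :=
        mul_le_of_le_one_right hε₀.le (pow_le_one₀ (by norm_num) (by norm_num))
      obtain ⟨y, hyS, hfy, hdist⟩ := hstep _ (by positivity) hεn x hx.1 hx.2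
      refine ⟨y, fun _ => ⟨⟨hyS, ?_⟩, by linarith⟩⟩
      rw [pow_succ]
      linarith
    · exact ⟨x, fun h => absurd h hx⟩
  choose next hnext using hnext_exists
  let u : ℕ → α := fun n => Nat.rec x₀ next n
  have hu : ∀ n, P n (u n) := by
    intro n
    induction n with
    | zero => simpa [P] using ⟨hx₀, hfx₀⟩
    | succ n ih => exact (hnext n _ ih).1
  have hcauchy : CauchySeq u :=
    cauchySeq_of_le_geometric (1 / 2) (K * ε₀) (by norm_num) fun n => by
      rw [dist_comm]
      exact (hnext n _ (hu n)).2
  obtain ⟨x, hx⟩ := cauchySeq_tendsto_of_complete hcauchy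
  refine ⟨x, hS.mem_of_tendsto hx (Eventually.of_forall fun n => (hu n).1), ?_⟩
  have hbound : Tendsto (fun n => c + ε₀ * (1 / 2 : ℝ) ^ n) atTop (𝓝 c) := by
    simpa using tendsto_const_nhds.add
      ((tendsto_pow_atTop_nhds_zero_of_lt_one (r := (1 / 2 : ℝ)) (by norm_num)
        (by norm_num)).const_mul ε₀)
  exact le_of_tendsto_of_tendsto' ((hf.tendsto x).comp hx) hbound fun n => (hu n).2

section PeakFunctions

variable {X : Type*} [TopologicalSpace X] [CompactSpace X] {A : Subalgebra ℂ C(X, ℂ)}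
  {f : C(X, ℂ)} {K : Set X}

theorem IsPeakingFunction.norm_apply_le_one_s4 (hf : IsPeakingFunction A f K) (x : X) :
    ‖f x‖ ≤ 1 :=
  hf.2.1 ▸ f.norm_coe_le_norm x

theorem IsPeakingFunction.apply_eq_one (hf : IsPeakingFunction A f K) {x : X} (hx : x ∈ K) :
    f x = 1 := by
  rw [hf.2.2.1] at hx
  exact hx

theorem IsPeakingFunction.norm_apply_lt_one (hf : IsPeakingFunction A f K) {x : X}
    (hx : x ∉ K) : ‖f x‖ < 1 :=
  (hf.norm_apply_le_one_s4 x).lt_of_ne fun h => hx (hf.2.2.2 ▸ h)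

theorem IsPeakSet.isClosed_s4 (hK : IsPeakSet A K) : IsClosed K := by
  obtain ⟨f, hf⟩ := hK
  rw [hf.2.2.1]
  exact isClosed_eq f.continuous continuous_const

theorem exists_norm_lt_one_on_of_mem_choquetBdry {y : X} (hy : y ∈ choquetBdry A)
    (hK : IsClosed K) (hyK : y ∉ K) :
    ∃ f ∈ A, (∀ x, ‖f x‖ ≤ 1) ∧ f y = 1 ∧ ∀ x ∈ K, ‖f x‖ < 1 := by
  classical
  obtain ⟨S, -, hS, hyS⟩ := hy
  choose φ hφ using hS
  have hyE : ∀ E ∈ S, y ∈ E := Set.mem_sInter.mp (hyS ▸ rfl)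
  have hdisj : K ∩ ⋂ E : S, (E : Set X) = ∅ := by
    rw [← Set.sInter_eq_iInter, ← hyS, Set.inter_singleton_eq_empty]
    exact hyK
  obtain ⟨t, ht⟩ := hK.isCompact.elim_finite_subfamily_closed _
    (fun E : S => IsPeakSet.isClosed_s4 ⟨_, hφ E E.2⟩) hdisj
  refine ⟨∏ E ∈ t, φ E E.2, prod_mem fun E _ => (hφ E E.2).1, fun x => ?_, ?_, fun x hx => ?_⟩
  · rw [ContinuousMap.prod_apply, norm_prod]
    exact Finset.prod_le_one (fun _ _ => norm_nonneg _)
      fun E _ => (hφ E E.2).norm_apply_le_one_s4 x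
  · rw [ContinuousMap.prod_apply]
    exact Finset.prod_eq_one fun E _ => (hφ E E.2).apply_eq_one (hyE E E.2)
  · obtain ⟨E, hEt, hxE⟩ : ∃ E ∈ t, x ∉ (E : Set X) := by
      by_contra! h
      exact (Set.eq_empty_iff_forall_notMem.mp ht) x ⟨hx, Set.mem_iInter₂.mpr h⟩
    rw [ContinuousMap.prod_apply, norm_prod, ← Finset.mul_prod_erase t _ hEt]
    calc ‖φ E E.2 x‖ * ∏ E' ∈ t.erase E, ‖φ E' E'.2 x‖ ≤ ‖φ E E.2 x‖ :=
          mul_le_of_le_one_right (norm_nonneg _) (Finset.prod_le_one (fun _ _ => norm_nonneg _)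
            fun E' _ => (hφ E' E'.2).norm_apply_le_one_s4 x)
      _ < 1 := (hφ E E.2).norm_apply_lt_one hxE

theorem exists_norm_lt_on_of_mem_choquetBdry {y : X} (hy : y ∈ choquetBdry A)
    (hK : IsClosed K) (hyK : y ∉ K) {η : ℝ} (hη : 0 < η) :
    ∃ f ∈ A, (∀ x, ‖f x‖ ≤ 1) ∧ f y = 1 ∧ ∀ x ∈ K, ‖f x‖ < η := by
  obtain ⟨f, hfA, hf1, hfy, hfK⟩ := exists_norm_lt_one_on_of_mem_choquetBdry hy hK hyK
  have : CompactSpace K := isCompact_iff_compactSpace.mp hK.isCompact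
  set r := ‖f.restrict K‖
  have hr : r < 1 := (ContinuousMap.norm_lt_iff _ one_pos).mpr fun x => hfK x x.2
  obtain ⟨N, hN⟩ := exists_pow_lt_of_lt_one hη hr
  refine ⟨f ^ N, pow_mem hfA N, fun x => ?_, by simp [hfy], fun x hx => ?_⟩
  · simpa using pow_le_one₀ (norm_nonneg _) (hf1 x)
  · calc ‖(f ^ N) x‖ = ‖f x‖ ^ N := by simp
      _ ≤ r ^ N := pow_le_pow_left₀ (norm_nonneg _) ((f.restrict K).norm_coe_le_norm ⟨x, hx⟩) N
      _ < η := hN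

end PeakFunctions

section Interpolation

variable {X : Type*} [TopologicalSpace X] [CompactSpace X] {A : Subalgebra ℂ C(X, ℂ)}
  {y₁ y₂ : X}

theorem exists_interpolant_norm_sub_le {f : C(X, ℂ)} (hfA : f ∈ A) (hf : f y₁ ≠ f y₂) :
    ∃ M, 0 ≤ M ∧ ∀ h₀ ∈ A, ∀ μ₁ μ₂ : ℂ, ∃ h ∈ A, h y₁ = μ₁ ∧ h y₂ = μ₂ ∧
      ‖h - h₀‖ ≤ M * (‖μ₁ - h₀ y₁‖ + ‖μ₂ - h₀ y₂‖) := by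
  set e : C(X, ℂ) := (f y₁ - f y₂)⁻¹ • (f - algebraMap ℂ C(X, ℂ) (f y₂))
  have heA : e ∈ A := A.smul_mem (A.sub_mem hfA (A.algebraMap_mem _)) _
  have he₁ : e y₁ = 1 := by
    simp [e, inv_mul_cancel₀ (sub_ne_zero.mpr hf)]
  have he₂ : e y₂ = 0 := by simp [e]
  clear_value e
  refine ⟨‖e‖ + ‖1 - e‖, by positivity, fun h₀ hh₀ μ₁ μ₂ => ?_⟩
  set a := μ₁ - h₀ y₁
  set b := μ₂ - h₀ y₂
  refine ⟨h₀ + a • e + b • (1 - e), A.add_mem (A.add_mem hh₀ (A.smul_mem heA a))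
    (A.smul_mem (A.sub_mem A.one_mem heA) b), by simp [he₁, a], by simp [he₂, b], ?_⟩
  calc ‖h₀ + a • e + b • (1 - e) - h₀‖ = ‖a • e + b • (1 - e)‖ := by
        rw [add_assoc, add_sub_cancel_left]
    _ ≤ ‖a‖ * ‖e‖ + ‖b‖ * ‖1 - e‖ :=
        (norm_add_le _ _).trans (add_le_add (norm_smul_le _ _) (norm_smul_le _ _))
    _ ≤ (‖e‖ + ‖1 - e‖) * (‖a‖ + ‖b‖) := by
        nlinarith [norm_nonneg a, norm_nonneg b, norm_nonneg e, norm_nonneg (1 - e)]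

theorem exists_interpolant_small_on [T2Space X] (hy₁ : y₁ ∈ choquetBdry A)
    (hy₂ : y₂ ∈ choquetBdry A) (hne : y₁ ≠ y₂) {C : Set X} (hC : IsClosed C) (hy₁C : y₁ ∉ C)
    (hy₂C : y₂ ∉ C) {μ₁ μ₂ : ℂ} (hμ₁ : ‖μ₁‖ ≤ 1) (hμ₂ : ‖μ₂‖ ≤ 1) {η : ℝ} (hη : 0 < η) :
    ∃ h ∈ A, h y₁ = μ₁ ∧ h y₂ = μ₂ ∧ ‖h‖ ≤ 1 + η ∧ ∀ x ∈ C, ‖h x‖ ≤ η := by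
  obtain ⟨f, hfA, -, hfy₁, hfy₂⟩ :=
    exists_norm_lt_one_on_of_mem_choquetBdry hy₁ isClosed_singleton hne
  have hsep : f y₁ ≠ f y₂ := fun h => by simpa [← h, hfy₁] using hfy₂ y₂ rfl
  obtain ⟨M, hM, hinterp⟩ := exists_interpolant_norm_sub_le hfA hsep
  set δ := η / (2 + 2 * M)
  have hδ : 0 < δ := by positivity
  have hδη : δ * (2 + 2 * M) = η := div_mul_cancel₀ _ (by positivity)
  obtain ⟨U₁, U₂, hU₁, hU₂, hy₁U, hy₂U, hU⟩ := t2_separation hne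
  obtain ⟨u, huA, hu1, huy₁, hu⟩ := exists_norm_lt_on_of_mem_choquetBdry hy₁
    (hC.union hU₁.isClosed_compl) (by simp [hy₁C, hy₁U]) hδ
  obtain ⟨v, hvA, hv1, hvy₂, hv⟩ := exists_norm_lt_on_of_mem_choquetBdry hy₂
    (hC.union hU₂.isClosed_compl) (by simp [hy₂C, hy₂U]) hδ
  have huv : ∀ x, ‖u x‖ + ‖v x‖ ≤ 1 + δ := by
    intro x
    by_cases hx : x ∈ U₁
    · have := hv x (Or.inr (hU.notMem_of_mem_left hx))
      linarith [hu1 x]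
    · have := hu x (Or.inr hx)
      linarith [hv1 x]
  set h₀ := μ₁ • u + μ₂ • v
  have hh₀ : ∀ x, ‖h₀ x‖ ≤ ‖u x‖ + ‖v x‖ := by
    intro x
    calc ‖h₀ x‖ ≤ ‖μ₁‖ * ‖u x‖ + ‖μ₂‖ * ‖v x‖ := by
          simpa [h₀] using norm_add_le (μ₁ * u x) (μ₂ * v x)
      _ ≤ ‖u x‖ + ‖v x‖ := by
          gcongr <;> nlinarith [norm_nonneg (u x), norm_nonneg (v x)]
  obtain ⟨h, hhA, hhy₁, hhy₂, hdist⟩ := hinterp h₀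
    (A.add_mem (A.smul_mem huA μ₁) (A.smul_mem hvA μ₂)) μ₁ μ₂
  have herr₁ : ‖μ₁ - h₀ y₁‖ ≤ δ := by
    have := hv y₁ (Or.inr (hU.notMem_of_mem_left hy₁U))
    simpa [h₀, huy₁] using (mul_le_of_le_one_left (norm_nonneg _) hμ₂).trans this.le
  have herr₂ : ‖μ₂ - h₀ y₂‖ ≤ δ := by
    have := hu y₂ (Or.inr (hU.notMem_of_mem_right hy₂U))
    simpa [h₀, hvy₂] using (mul_le_of_le_one_left (norm_nonneg _) hμ₁).trans this.le
  have hh : ∀ x, ‖h x‖ ≤ ‖h₀ x‖ + 2 * M * δ := by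
    intro x
    calc ‖h x‖ ≤ ‖h₀ x‖ + ‖(h - h₀) x‖ := norm_le_norm_add_norm_sub' _ _
      _ ≤ ‖h₀ x‖ + 2 * M * δ := by
          nlinarith [(h - h₀).norm_coe_le_norm x]
  refine ⟨h, hhA, hhy₁, hhy₂, (h.norm_le (by positivity)).mpr fun x => ?_, fun x hx => ?_⟩
  · nlinarith [hh x, hh₀ x, huv x]
  · nlinarith [hh x, hh₀ x, hu x (Or.inl hx), hv x (Or.inl hx)]

theorem exists_interpolant_norm_le_one_add_half [T2Space X] (hy₁ : y₁ ∈ choquetBdry A)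
    (hy₂ : y₂ ∈ choquetBdry A) (hne : y₁ ≠ y₂) {μ₁ μ₂ : ℂ} (hμ₁ : ‖μ₁‖ ≤ 1) (hμ₂ : ‖μ₂‖ ≤ 1)
    {ε : ℝ} (hε : 0 < ε) (hε1 : ε ≤ 1) {g : C(X, ℂ)} (hgA : g ∈ A) (hg₁ : g y₁ = μ₁) (hg₂ : g y₂ = μ₂) (hg : ‖g‖ ≤ 1 + ε) :
    ∃ g' ∈ A, g' y₁ = μ₁ ∧ g' y₂ = μ₂ ∧ ‖g'‖ ≤ 1 + ε / 2 ∧ dist g' g ≤ 2 * ε := by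
  set B := {x | 1 + ε / 4 ≤ ‖g x‖}
  have hB : IsClosed B := isClosed_le continuous_const (continuous_norm.comp g.continuous)
  have hy₁B : y₁ ∉ B := by simp only [B, Set.mem_ofPred_eq, hg₁]; linarith
  have hy₂B : y₂ ∉ B := by simp only [B, Set.mem_ofPred_eq, hg₂]; linarith
  obtain ⟨h, hhA, hh₁, hh₂, hh, hhB⟩ := exists_interpolant_small_on hy₁ hy₂ hne hB hy₁B hy₂B
    hμ₁ hμ₂ (η := ε / 4) (by positivity)
  set s : ℂ := ((ε / 2 : ℝ) : ℂ)
  have hs : ‖s‖ = ε / 2 := Complex.norm_of_nonneg (by positivity)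
  have h1s : ‖1 - s‖ = 1 - ε / 2 := by
    rw [show 1 - s = ((1 - ε / 2 : ℝ) : ℂ) by push_cast [s]; ring]
    exact Complex.norm_of_nonneg (by linarith)
  refine ⟨g + s • (h - g), A.add_mem hgA (A.smul_mem (A.sub_mem hhA hgA) s),
    by simp [hg₁, hh₁], by simp [hg₂, hh₂], ((g + s • (h - g)).norm_le (by positivity)).mpr
      fun x => ?_, ?_⟩
  · have hconv : ‖(g + s • (h - g)) x‖ ≤ (1 - ε / 2) * ‖g x‖ + ε / 2 * ‖h x‖ := by
      calc ‖(g + s • (h - g)) x‖ = ‖(1 - s) * g x + s * h x‖ := by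
            simp only [ContinuousMap.add_apply, ContinuousMap.smul_apply,
              ContinuousMap.sub_apply, smul_eq_mul]
            ring_nf
        _ ≤ (1 - ε / 2) * ‖g x‖ + ε / 2 * ‖h x‖ := by
          simpa [hs, h1s] using norm_add_le ((1 - s) * g x) (s * h x)
    by_cases hx : x ∈ B
    · nlinarith [hhB x hx, g.norm_coe_le_norm x]
    · simp only [B, Set.mem_ofPred_eq, not_le] at hx
      nlinarith [h.norm_coe_le_norm x]
  · calc dist (g + s • (h - g)) g = ε / 2 * ‖h - g‖ := by
          rw [dist_eq_norm, add_sub_cancel_left, norm_smul, hs]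
      _ ≤ ε / 2 * (‖h‖ + ‖g‖) := by gcongr; exact norm_sub_le _ _
      _ ≤ 2 * ε := by nlinarith

end Interpolation

theorem exists_sphere_elt_with_unimodular_values_general
    {X : Type*} [TopologicalSpace X] [CompactSpace X] [T2Space X]
    (A : Subalgebra ℂ C(X, ℂ)) (hA : IsClosed (A : Set C(X, ℂ)))
    (y₁ y₂ : X) (hy₁ : y₁ ∈ choquetBdry A) (hy₂ : y₂ ∈ choquetBdry A) (hne : y₁ ≠ y₂)
    (μ₁ μ₂ : ℂ) (hμ₁ : ‖μ₁‖ = 1) (hμ₂ : ‖μ₂‖ = 1) :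
    ∃ g ∈ uaSphere A, g y₁ = μ₁ ∧ g y₂ = μ₂ := by
  set S : Set C(X, ℂ) := {g | g ∈ A ∧ g y₁ = μ₁ ∧ g y₂ = μ₂}
  have hS : IsClosed S := hA.inter <|
    (isClosed_eq (continuous_eval_const y₁) continuous_const).inter
      (isClosed_eq (continuous_eval_const y₂) continuous_const)
  obtain ⟨g₀, hg₀A, hg₀₁, hg₀₂, hg₀, -⟩ := exists_interpolant_small_on hy₁ hy₂ hne isClosed_empty
    (Set.notMem_empty _) (Set.notMem_empty _) hμ₁.le hμ₂.le one_pos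
  obtain ⟨g, ⟨hgA, hg₁, hg₂⟩, hg⟩ := exists_mem_le_of_forall_halve_excess hS continuous_norm
    (x₀ := g₀) ⟨hg₀A, hg₀₁, hg₀₂⟩ hg₀ fun ε hε hε1 g ⟨hgA, hg₁, hg₂⟩ hg => by
      obtain ⟨g', hg'A, hg'₁, hg'₂, hg', hdist⟩ := exists_interpolant_norm_le_one_add_half hy₁ hy₂
        hne hμ₁.le hμ₂.le hε hε1 hgA hg₁ hg₂ hg
      exact ⟨g', ⟨hg'A, hg'₁, hg'₂⟩, hg', hdist⟩
  refine ⟨g, ⟨hgA, hg.antisymm ?_⟩, hg₁, hg₂⟩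
  simpa [hg₁, hμ₁] using g.norm_coe_le_norm y₁

/-- For two distinct Choquet boundary points `y₁, y₂` of a uniform algebra `A` and any
unimodular `μ₁, μ₂` there is `g ∈ S(A)` with `g y₁ = μ₁` and `g y₂ = μ₂`. -/
theorem exists_sphere_elt_with_unimodular_values
    {X : Type*} [TopologicalSpace X] [CompactSpace X] [T2Space X] [Nonempty X]
    (A : Subalgebra ℂ C(X, ℂ)) (hA : IsClosed (A : Set C(X, ℂ)))
    (hAsep : ∀ x₁ x₂ : X, x₁ ≠ x₂ → ∃ f ∈ A, f x₁ ≠ f x₂)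
    (y₁ y₂ : X) (hy₁ : y₁ ∈ choquetBdry A) (hy₂ : y₂ ∈ choquetBdry A) (hne : y₁ ≠ y₂)
    (μ₁ μ₂ : ℂ) (hμ₁ : ‖μ₁‖ = 1) (hμ₂ : ‖μ₂‖ = 1) :
    ∃ g ∈ uaSphere A, g y₁ = μ₁ ∧ g y₂ = μ₂ :=
  exists_sphere_elt_with_unimodular_values_general A hA y₁ y₂ hy₁ hy₂ hne μ₁ μ₂ hμ₁ hμ₂
end

section
/- Let A and B be uniform algebras on compact Hausdorff spaces X and Y, let T : S(A) → S(B) be a surjective isometry, and let φ : Ch(A) → Ch(B) be a bijection and τ : Ch(A) × 𝕋 → 𝕋 a map with T(F_{x,λ}) = F_{φ(x), τ(x,λ)} for all x ∈ Ch(A), λ ∈ 𝕋. Define Ch(A)₊ = {x ∈ Ch(A) : τ(x,i)/τ(x,1) = i} and Ch(A)₋ = {x ∈ Ch(A) : τ(x,i)/τ(x,1) = −i}. Then Ch(A)₊ ∪ Ch(A)₋ = Ch(A), and for every λ ∈ 𝕋 one has τ(x,λ) = λ·τ(x,1) when x ∈ Ch(A)₊ and τ(x,λ) = conj(λ)·τ(x,1)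 when x ∈ Ch(A)₋. -/
open scoped ComplexConjugate

/-!
Fix `x ∈ Ch(A)` and peaking functions `h ∈ S(A)`, `k ∈ S(B)` with `h x = 1`, `k (φ x) = 1`.
Testing `T` on the functions `λ • h` and choosing preimages of `τ(x,λ) • k` shows that
`λ ↦ τ(x,λ)` preserves distances on the unit circle `𝕋`. After dividing by `τ(x,1)` it becomes an
isometry of `𝕋` fixing `1`. Since `‖z - w‖² = 2 - 2 Re (z * conj w)` on `𝕋`, such a map preserves
`Re (z * conj w)`; hence it sends `i` to `±i` and is then the identity or complex conjugation.
-/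

namespace Complex

theorem re_mul_conj_eq_of_norm_sub_eq {z w z' w' : ℂ} (hz : ‖z‖ = ‖z'‖) (hw : ‖w‖ = ‖w'‖)
    (h : ‖z - w‖ = ‖z' - w'‖) : (z * conj w).re = (z' * conj w').re := by
  have e := normSq_sub z w
  have e' := normSq_sub z' w'
  simp only [← Complex.sq_norm] at e e'
  rw [h, hz, hw] at e
  linarith

end Complex

structure IsCircleIsometry (u : ℂ → ℂ) : Prop where
  norm_apply : ∀ z, ‖z‖ = 1 → ‖u z‖ = 1
  norm_sub_apply : ∀ z w, ‖z‖ = 1 → ‖w‖ = 1 → ‖u z - u w‖ = ‖z - w‖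

namespace IsCircleIsometry

open Complex

variable {u : ℂ → ℂ}

theorem div_apply_one (hu : IsCircleIsometry u) : IsCircleIsometry (fun z => u z / u 1) where
  norm_apply z hz := by rw [norm_div, hu.norm_apply z hz, hu.norm_apply 1 norm_one, div_one]
  norm_sub_apply z w hz hw := by
    rw [← sub_div, norm_div, hu.norm_apply 1 norm_one, div_one, hu.norm_sub_apply z w hz hw]

theorem re_mul_conj_apply (hu : IsCircleIsometry u) {z w : ℂ} (hz : ‖z‖ = 1) (hw : ‖w‖ = 1) :
    (u z * conj (u w)).re = (z * conj w).re :=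
  re_mul_conj_eq_of_norm_sub_eq (by rw [hu.norm_apply z hz, hz])
    (by rw [hu.norm_apply w hw, hw]) (hu.norm_sub_apply z w hz hw)

theorem re_apply (hu : IsCircleIsometry u) (h1 : u 1 = 1) {z : ℂ} (hz : ‖z‖ = 1) :
    (u z).re = z.re := by
  simpa [h1] using hu.re_mul_conj_apply hz norm_one

theorem apply_I_eq_I_or_neg_I (hu : IsCircleIsometry u) (h1 : u 1 = 1) : u I = I ∨ u I = -I := by
  have hre : (u I).re = 0 := by simpa using hu.re_apply h1 norm_I
  have him : (u I).im ^ 2 = 1 := by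
    rw [← sq_norm_sub_sq_re, hu.norm_apply I norm_I, hre]; norm_num
  rcases sq_eq_one_iff.1 him with h | h
  · exact Or.inl (ext (by simpa using hre) (by simpa using h))
  · exact Or.inr (ext (by simpa using hre) (by simpa using h))

theorem apply_eq_self (hu : IsCircleIsometry u) (h1 : u 1 = 1) (hI : u I = I) {z : ℂ}
    (hz : ‖z‖ = 1) : u z = z := by
  have him : (u z).im = z.im := by simpa [hI] using hu.re_mul_conj_apply hz norm_I
  exact ext (hu.re_apply h1 hz) him

theorem apply_eq_conj (hu : IsCircleIsometry u) (h1 : u 1 = 1) (hI : u I = -I) {z : ℂ}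
    (hz : ‖z‖ = 1) : u z = conj z := by
  have him : -(u z).im = z.im := by simpa [hI] using hu.re_mul_conj_apply hz norm_I
  exact ext (by simpa using hu.re_apply h1 hz) (by simp [← him])

theorem eq_mul_or_eq_conj_mul (hu : IsCircleIsometry u) :
    (u I / u 1 = I ∨ u I / u 1 = -I) ∧
      ∀ lam : ℂ, ‖lam‖ = 1 →
        (u I / u 1 = I → u lam = lam * u 1) ∧ (u I / u 1 = -I → u lam = conj lam * u 1) := by
  have hu1 : u 1 ≠ 0 := by rw [← norm_ne_zero_iff, hu.norm_apply 1 norm_one]; exact one_ne_zero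
  have hv := hu.div_apply_one
  have hv1 : u 1 / u 1 = 1 := div_self hu1
  refine ⟨hv.apply_I_eq_I_or_neg_I hv1, fun lam hlam => ⟨fun hI => ?_, fun hI => ?_⟩⟩
  · exact (div_eq_iff hu1).1 (hv.apply_eq_self hv1 hI hlam)
  · exact (div_eq_iff hu1).1 (hv.apply_eq_conj hv1 hI hlam)

end IsCircleIsometry

section UniformAlgebra

variable {X : Type*} [TopologicalSpace X] [CompactSpace X] {A : Subalgebra ℂ C(X, ℂ)}

theorem exists_mem_uaSphere_apply_eq_one_of_mem_choquetBdry {x : X} (hx : x ∈ choquetBdry A) :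
    ∃ h ∈ uaSphere A, h x = 1 := by
  obtain ⟨S, ⟨E, hE⟩, hpeak, hxS⟩ := hx
  obtain ⟨h, hA, hnorm, rfl, -⟩ := hpeak E hE
  exact ⟨h, ⟨hA, hnorm⟩, (hxS ▸ Set.mem_singleton x : x ∈ ⋂₀ S) _ hE⟩

theorem smul_mem_uaSlice {h : C(X, ℂ)} (hh : h ∈ uaSphere A) {x : X} (hx : h x = 1) {c : ℂ}
    (hc : ‖c‖ = 1) : c • h ∈ uaSlice A x c :=
  ⟨⟨A.smul_mem hh.1 c, by rw [norm_smul, hh.2, hc, one_mul]⟩, by simp [hx]⟩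

theorem norm_sub_le_of_mem_uaSlice {f g : C(X, ℂ)} {x : X} {lam mu : ℂ}
    (hf : f ∈ uaSlice A x lam) (hg : g ∈ uaSlice A x mu) : ‖lam - mu‖ ≤ ‖f - g‖ := by
  simpa [hf.2, hg.2] using (f - g).norm_coe_le_norm x

theorem norm_smul_sub_smul_of_mem_uaSphere {h : C(X, ℂ)} (hh : h ∈ uaSphere A) (c d : ℂ) :
    ‖c • h - d • h‖ = ‖c - d‖ := by
  rw [← sub_smul, norm_smul, hh.2, mul_one]

end UniformAlgebra

theorem isCircleIsometry_of_image_uaSlice_eq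
    {X Y : Type*} [TopologicalSpace X] [CompactSpace X] [TopologicalSpace Y] [CompactSpace Y]
    {A : Subalgebra ℂ C(X, ℂ)} {B : Subalgebra ℂ C(Y, ℂ)} {T : uaSphere A → uaSphere B}
    (hT : ∀ f g : uaSphere A,
      ‖(T f : C(Y, ℂ)) - (T g : C(Y, ℂ))‖ = ‖(f : C(X, ℂ)) - (g : C(X, ℂ))‖)
    {x : X} {y : Y} (hx : x ∈ choquetBdry A) (hy : y ∈ choquetBdry B) {t : ℂ → ℂ}
    (ht : ∀ lam : ℂ, ‖lam‖ = 1 →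
      ‖t lam‖ = 1 ∧
      (fun f : uaSphere A => (T f : C(Y, ℂ))) ''
          {f : uaSphere A | (f : C(X, ℂ)) ∈ uaSlice A x lam} = uaSlice B y (t lam)) :
    IsCircleIsometry t := by
  refine ⟨fun lam hlam => (ht lam hlam).1, fun lam mu hlam hmu => le_antisymm ?_ ?_⟩
  · obtain ⟨h, hh, hhx⟩ := exists_mem_uaSphere_apply_eq_one_of_mem_choquetBdry hx
    have hT_smul : ∀ c (hc : ‖c‖ = 1),
        (T ⟨c • h, (smul_mem_uaSlice hh hhx hc).1⟩ : C(Y, ℂ)) ∈ uaSlice B y (t c) :=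
      fun c hc => (ht c hc).2 ▸ ⟨_, smul_mem_uaSlice hh hhx hc, rfl⟩
    calc ‖t lam - t mu‖ ≤ _ := norm_sub_le_of_mem_uaSlice (hT_smul lam hlam) (hT_smul mu hmu)
      _ = ‖lam - mu‖ := by rw [hT]; exact norm_smul_sub_smul_of_mem_uaSphere hh lam mu
  · obtain ⟨k, hk, hky⟩ := exists_mem_uaSphere_apply_eq_one_of_mem_choquetBdry hy
    have hT_preimage : ∀ c (hc : ‖c‖ = 1),
        ∃ f : uaSphere A, (f : C(X, ℂ)) ∈ uaSlice A x c ∧ (T f : C(Y, ℂ)) = t c • k := by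
      intro c hc
      simpa [← (ht c hc).2] using smul_mem_uaSlice hk hky (ht c hc).1
    obtain ⟨f, hf, hTf⟩ := hT_preimage lam hlam
    obtain ⟨g, hg, hTg⟩ := hT_preimage mu hmu
    calc ‖lam - mu‖ ≤ _ := norm_sub_le_of_mem_uaSlice hf hg
      _ = ‖t lam - t mu‖ := by
        rw [← hT, hTf, hTg]; exact norm_smul_sub_smul_of_mem_uaSphere hk _ _

theorem torus_map_formula_general
    {X Y : Type*} [TopologicalSpace X] [CompactSpace X] [TopologicalSpace Y] [CompactSpace Y]
    (A : Subalgebra ℂ C(X, ℂ)) (B : Subalgebra ℂ C(Y, ℂ))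
    (T : ↥(uaSphere A) → ↥(uaSphere B))
    (hTiso : ∀ f g : ↥(uaSphere A),
      ‖(T f : C(Y, ℂ)) - (T g : C(Y, ℂ))‖ = ‖(f : C(X, ℂ)) - (g : C(X, ℂ))‖)
    (φ : X → Y) (hφ : Set.BijOn φ (choquetBdry A) (choquetBdry B))
    (τ : X → ℂ → ℂ)
    (hτ : ∀ x ∈ choquetBdry A, ∀ lam : ℂ, ‖lam‖ = 1 →
      ‖τ x lam‖ = 1 ∧
      (fun f : ↥(uaSphere A) => (T f : C(Y, ℂ))) ''
          {f : ↥(uaSphere A) | (f : C(X, ℂ)) ∈ uaSlice A x lam} =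
        uaSlice B (φ x) (τ x lam)) :
    ∀ x ∈ choquetBdry A,
      (τ x Complex.I / τ x 1 = Complex.I ∨ τ x Complex.I / τ x 1 = -Complex.I) ∧
      ∀ lam : ℂ, ‖lam‖ = 1 →
        (τ x Complex.I / τ x 1 = Complex.I → τ x lam = lam * τ x 1) ∧
        (τ x Complex.I / τ x 1 = -Complex.I → τ x lam = conj lam * τ x 1) :=
  fun x hx =>
    (isCircleIsometry_of_image_uaSlice_eq hTiso hx (hφ.mapsTo hx) (hτ x hx)).eq_mul_or_eq_conj_mul

/-- With `φ`, `τ` as in the correspondence `T(F_{x,λ}) = F_{φ(x),τ(x,λ)}`, every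
`x ∈ Ch(A)` satisfies `τ(x,i)/τ(x,1) = ± i`, and `τ(x,λ) = λ·τ(x,1)` for
`x ∈ Ch(A)₊` while `τ(x,λ) = conj(λ)·τ(x,1)` for `x ∈ Ch(A)₋`. -/
theorem torus_map_formula
    {X Y : Type*} [TopologicalSpace X] [CompactSpace X] [T2Space X] [Nonempty X]
    [TopologicalSpace Y] [CompactSpace Y] [T2Space Y] [Nonempty Y]
    (A : Subalgebra ℂ C(X, ℂ)) (hA : IsClosed (A : Set C(X, ℂ)))
    (hAsep : ∀ x₁ x₂ : X, x₁ ≠ x₂ → ∃ f ∈ A, f x₁ ≠ f x₂)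
    (B : Subalgebra ℂ C(Y, ℂ)) (hB : IsClosed (B : Set C(Y, ℂ)))
    (hBsep : ∀ y₁ y₂ : Y, y₁ ≠ y₂ → ∃ g ∈ B, g y₁ ≠ g y₂)
    (T : ↥(uaSphere A) → ↥(uaSphere B))
    (hTsur : Function.Surjective T)
    (hTiso : ∀ f g : ↥(uaSphere A),
      ‖(T f : C(Y, ℂ)) - (T g : C(Y, ℂ))‖ = ‖(f : C(X, ℂ)) - (g : C(X, ℂ))‖)
    (φ : X → Y) (hφ : Set.BijOn φ (choquetBdry A) (choquetBdry B))
    (τ : X → ℂ → ℂ)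
    (hτ : ∀ x ∈ choquetBdry A, ∀ lam : ℂ, ‖lam‖ = 1 →
      ‖τ x lam‖ = 1 ∧
      (fun f : ↥(uaSphere A) => (T f : C(Y, ℂ))) ''
          {f : ↥(uaSphere A) | (f : C(X, ℂ)) ∈ uaSlice A x lam} =
        uaSlice B (φ x) (τ x lam)) :
    ∀ x ∈ choquetBdry A,
      (τ x Complex.I / τ x 1 = Complex.I ∨ τ x Complex.I / τ x 1 = -Complex.I) ∧
      ∀ lam : ℂ, ‖lam‖ = 1 →
        (τ x Complex.I / τ x 1 = Complex.I → τ x lam = lam * τ x 1) ∧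
        (τ x Complex.I / τ x 1 = -Complex.I → τ x lam = conj lam * τ x 1) :=
  torus_map_formula_general A B T hTiso φ hφ τ hτ
end

section
/- Let R be the convex hull in ℂ of the four points 0, (√3/3)·exp(iπ/6), (√3/3)·exp(−iπ/6), 1, and let R̃ be the convex hull in ℂ of the six points 0, (1/3)·exp(iπ/3), (1/3)·exp(−iπ/3), (√3/3)·exp(iπ/6), (√3/3)·exp(−iπ/6), 1. Then: (i) for every z ∈ R̃ one has |2z − 1| ≤ 1; (ii) for all z, w ∈ R one has zw ∈ R̃. -/
/-- The closed solid rhombus with vertices `0`, `(√3/3)·e^{±iπ/6}`, `1`. -/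
noncomputable def rhombusR : Set ℂ :=
  convexHull ℝ
    {0, (Real.sqrt 3 / 3 : ℝ) * Complex.exp (Complex.I * ((Real.pi : ℂ) / 6)),
      (Real.sqrt 3 / 3 : ℝ) * Complex.exp (-(Complex.I * ((Real.pi : ℂ) / 6))), 1}

/-- The closed solid hexagon with vertices `0`, `(1/3)·e^{±iπ/3}`,
`(√3/3)·e^{±iπ/6}`, `1`. -/
noncomputable def hexagonR : Set ℂ :=
  convexHull ℝ
    {0, (1 / 3 : ℂ) * Complex.exp (Complex.I * ((Real.pi : ℂ) / 3)),
      (1 / 3 : ℂ) * Complex.exp (-(Complex.I * ((Real.pi : ℂ) / 3))),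
      (Real.sqrt 3 / 3 : ℝ) * Complex.exp (Complex.I * ((Real.pi : ℂ) / 6)),
      (Real.sqrt 3 / 3 : ℝ) * Complex.exp (-(Complex.I * ((Real.pi : ℂ) / 6))), 1}

/-!
Write `u = (√3/3)·e^{iπ/6} = 1/2 + (√3/6)i`. Then `R = conv {0, u, ū, 1}` and
`R̃ = conv {0, u², ū², u, ū, 1}`. Since multiplication is bilinear, a product of two convex hulls
lies in the convex hull of the pairwise products, and the pairwise products of the vertices of `R`
are vertices of `R̃`, except `uū = |u|² = 1/3`, which lies on the segment `[0, 1]`.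
The condition `‖2z - 1‖ ≤ 1` describes the closed disc on the diameter `[0, 1]`, i.e. `|z|² ≤ Re z`;
this disc is convex and contains the six vertices of `R̃`.
-/

open Complex ComplexConjugate Metric Pointwise

theorem convexHull_mul_subset {𝕜 A : Type*} [CommSemiring 𝕜] [PartialOrder 𝕜] [Semiring A]
    [Algebra 𝕜 A] (s t : Set A) : convexHull 𝕜 s * convexHull 𝕜 t ⊆ convexHull 𝕜 (s * t) := by
  rintro _ ⟨x, hx, y, hy, rfl⟩
  refine convexHull_min (fun a ha => ?_)
    ((convex_convexHull 𝕜 _).linear_preimage (LinearMap.mulRight 𝕜 y)) hx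
  exact convexHull_min (t := LinearMap.mulLeft 𝕜 a ⁻¹' convexHull 𝕜 (s * t))
    (fun b hb => subset_convexHull 𝕜 _ (Set.mul_mem_mul ha hb))
    ((convex_convexHull 𝕜 _).linear_preimage _) hy

namespace Complex

theorem norm_two_mul_sub_one_le_one_iff (z : ℂ) :
    ‖2 * z - 1‖ ≤ 1 ↔ z ∈ closedBall (1 / 2) (1 / 2) := by
  rw [mem_closedBall, dist_eq_norm, show 2 * z - 1 = 2 * (z - 1 / 2) by ring, norm_mul,
    norm_ofNat]
  constructor <;> intro h <;> linarith

theorem mem_closedBall_half_iff (z : ℂ) : z ∈ closedBall (1 / 2) (1 / 2) ↔ normSq z ≤ z.re := by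
  rw [← norm_two_mul_sub_one_le_one_iff, ← sq_le_one_iff₀ (norm_nonneg _), ← normSq_eq_norm_sq,
    normSq_apply, normSq_apply]
  simp only [sub_re, sub_im, mul_re, mul_im, re_ofNat, im_ofNat, one_re, one_im]
  constructor <;> intro h <;> nlinarith

end Complex

noncomputable def rhombusVertex : ℂ := (Real.sqrt 3 / 3 : ℝ) * exp (I * (Real.pi / 6))

theorem rhombusVertex_eq : rhombusVertex = ⟨1 / 2, Real.sqrt 3 / 6⟩ := by
  have h3 : Real.sqrt 3 * Real.sqrt 3 = 3 := Real.mul_self_sqrt (by norm_num)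
  rw [rhombusVertex, mul_comm I,
    show (Real.pi : ℂ) / 6 = ((Real.pi / 6 : ℝ) : ℂ) by push_cast; ring,
    exp_mul_I, ← ofReal_cos, ← ofReal_sin, Real.cos_pi_div_six, Real.sin_pi_div_six]
  apply Complex.ext <;> simp <;> linarith

theorem normSq_rhombusVertex : normSq rhombusVertex = 1 / 3 := by
  have h3 : Real.sqrt 3 * Real.sqrt 3 = 3 := Real.mul_self_sqrt (by norm_num)
  rw [rhombusVertex_eq, normSq_mk]
  linarith

theorem rhombusVertex_sq_re : (rhombusVertex ^ 2).re = 1 / 6 := by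
  have h3 : Real.sqrt 3 * Real.sqrt 3 = 3 := Real.mul_self_sqrt (by norm_num)
  rw [sq, mul_re, rhombusVertex_eq]
  dsimp only
  linarith

theorem rhombusVertex_mul_conj : rhombusVertex * conj rhombusVertex = 1 / 3 := by
  rw [mul_conj, normSq_rhombusVertex]
  norm_num

theorem conj_rhombusVertex :
    conj rhombusVertex = (Real.sqrt 3 / 3 : ℝ) * exp (-(I * (Real.pi / 6))) := by
  simp [rhombusVertex, ← exp_conj, map_ofNat]

theorem rhombusVertex_sq : rhombusVertex ^ 2 = (1 / 3 : ℂ) * exp (I * (Real.pi / 3)) := by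
  have hr : ((Real.sqrt 3 / 3 : ℝ) : ℂ) ^ 2 = 1 / 3 := by
    rw [← ofReal_pow, div_pow, Real.sq_sqrt (by norm_num)]
    norm_num
  rw [rhombusVertex, mul_pow, hr, ← exp_nat_mul]
  congr 2
  push_cast
  ring

theorem conj_rhombusVertex_sq :
    conj (rhombusVertex ^ 2) = (1 / 3 : ℂ) * exp (-(I * (Real.pi / 3))) := by
  simp [rhombusVertex_sq, ← exp_conj, map_ofNat]

theorem rhombusR_eq : rhombusR = convexHull ℝ {0, rhombusVertex, conj rhombusVertex, 1} := by
  rw [conj_rhombusVertex]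
  rfl

theorem hexagonR_eq : hexagonR = convexHull ℝ
    {0, rhombusVertex ^ 2, conj (rhombusVertex ^ 2), rhombusVertex, conj rhombusVertex, 1} := by
  rw [conj_rhombusVertex, conj_rhombusVertex_sq, rhombusVertex_sq]
  rfl

theorem hexagonR_subset_closedBall : hexagonR ⊆ closedBall (1 / 2) (1 / 2) := by
  have hu : normSq rhombusVertex ≤ rhombusVertex.re := by
    rw [normSq_rhombusVertex, rhombusVertex_eq]
    norm_num
  have hu2 : normSq (rhombusVertex ^ 2) ≤ (rhombusVertex ^ 2).re := by
    rw [map_pow, normSq_rhombusVertex, rhombusVertex_sq_re]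
    norm_num
  rw [hexagonR_eq]
  refine convexHull_min ?_ (convex_closedBall _ _)
  rintro v (rfl | rfl | rfl | rfl | rfl | rfl) <;>
    simp only [mem_closedBall_half_iff, normSq_conj, conj_re] <;>
    first | assumption | simp

theorem rhombusR_mul_subset : rhombusR * rhombusR ⊆ hexagonR := by
  have hthird : (1 / 3 : ℂ) ∈ hexagonR := by
    rw [hexagonR_eq]
    simpa using (convex_convexHull ℝ _).smul_mem_of_zero_mem (subset_convexHull ℝ _ (by simp))
      (subset_convexHull ℝ _ (by simp)) (t := (1 / 3 : ℝ)) (x := (1 : ℂ))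
      ⟨by norm_num, by norm_num⟩
  rw [rhombusR_eq]
  refine (convexHull_mul_subset _ _).trans
    (convexHull_min ?_ (hexagonR_eq ▸ convex_convexHull ℝ _))
  rintro _ ⟨a, ha, b, hb, rfl⟩
  simp only [Set.mem_insert_iff, Set.mem_singleton_iff] at ha hb
  rcases ha with rfl | rfl | rfl | rfl <;> rcases hb with rfl | rfl | rfl | rfl <;>
    simp only [mul_zero, zero_mul, mul_one, one_mul, ← sq, ← map_pow, rhombusVertex_mul_conj,
      mul_comm (conj rhombusVertex) rhombusVertex, hthird] <;>
    exact hexagonR_eq ▸ subset_convexHull ℝ _ (by simp)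

/-- (i) Every `z` in the hexagon satisfies `|2z - 1| ≤ 1`; (ii) the product of two
points of the rhombus lies in the hexagon. -/
theorem rhombus_hexagon_properties :
    (∀ z ∈ hexagonR, ‖2 * z - 1‖ ≤ 1) ∧
    (∀ z ∈ rhombusR, ∀ w ∈ rhombusR, z * w ∈ hexagonR) :=
  ⟨fun z hz => (norm_two_mul_sub_one_le_one_iff z).2 (hexagonR_subset_closedBall hz),
    fun _ hz _ hw => rhombusR_mul_subset (Set.mul_mem_mul hz hw)⟩
end

section
/- Let A be a uniform algebra on a compact Hausdorff space X, let f ∈ S(A), let x ∈ Ch(A), and put α = f(x) and λ = α/|α| (where λ is read as 1 if α = 0). Then for every 0 < r < 1 there exists u ∈ A with u(x) = 1 = ‖u‖ and u⁻¹(1) = {y ∈ X : |u(y)| = 1} such that the functions g₊ = (λ − rα)·u + r·f and g₋ = (−λ − rα)·u + r·f belong to S(A) and satisfy g₊(x) = λ and g₋(x) = −λ. -/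
open scoped ComplexConjugate

/-!
Peak functions for a point `x` of the Choquet boundary can be made uniformly small on any compact
set avoiding `x` (compactness, products and powers), and a Möbius transformation moves their
range into the disc `|w - 1/2| ≤ 1/2`, which meets the unit circle only at `1`. Summing such
disc-valued peak functions with weights `2⁻⁽ⁿ⁺¹⁾`, the `n`-th one small where `|f - α|` exceeds a
multiple of `2⁻ⁿ`, gives a peak function `u` such that at every point either `|u|` is small or
`1 - |u|` dominates `|f - α|`. In both cases `|g±| ≤ 1` by elementary estimates.
-/

open Metric

lemma mem_closedBall_half_iff {w : ℂ} : w ∈ closedBall (1 / 2 : ℂ) (1 / 2) ↔ ‖w‖ ^ 2 ≤ w.re := by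
  rw [mem_closedBall, dist_eq_norm, ← sq_le_sq₀ (norm_nonneg _) (by norm_num), Complex.sq_norm,
    Complex.sq_norm, Complex.normSq_apply, Complex.normSq_apply]
  simp only [Complex.sub_re, Complex.sub_im, Complex.div_ofNat_re, Complex.div_ofNat_im,
    Complex.one_re, Complex.one_im]
  constructor <;> intro h <;> nlinarith

lemma norm_le_one_of_mem_closedBall_half {w : ℂ} (hw : w ∈ closedBall (1 / 2 : ℂ) (1 / 2)) :
    ‖w‖ ≤ 1 :=
  mem_closedBall_zero_iff.1 <| closedBall_subset_closedBall' (by norm_num [dist_eq_norm]) hw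

lemma eq_one_of_mem_closedBall_half {w : ℂ} (hw : w ∈ closedBall (1 / 2 : ℂ) (1 / 2))
    (h1 : ‖w‖ = 1) : w = 1 := by
  rw [mem_closedBall_half_iff, h1] at hw
  have hsq := Complex.sq_norm w
  rw [h1, Complex.normSq_apply] at hsq
  have hre : w.re ≤ 1 := h1 ▸ Complex.re_le_norm w
  exact Complex.ext (by simp; nlinarith) (by simp; nlinarith)

lemma setOf_eq_one_eq_setOf_norm_eq_one {X : Type*} {u : X → ℂ}
    (hu : ∀ y, u y ∈ closedBall (1 / 2 : ℂ) (1 / 2)) : {y | u y = 1} = {y | ‖u y‖ = 1} :=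
  Set.ext fun y => ⟨fun (h : u y = 1) => show ‖u y‖ = 1 by rw [h, norm_one],
    eq_one_of_mem_closedBall_half (hu y)⟩

lemma norm_sub_le_norm_one_sub_mul {z : ℂ} {b : ℝ} (hz : ‖z‖ ≤ 1) (hb0 : 0 ≤ b) (hb1 : b ≤ 1) :
    ‖z - b‖ ≤ ‖1 - b * z‖ := by
  rw [← sq_le_sq₀ (norm_nonneg _) (norm_nonneg _), Complex.sq_norm, Complex.sq_norm,
    Complex.normSq_apply, Complex.normSq_apply]
  have hz2 := Complex.sq_norm z
  rw [Complex.normSq_apply] at hz2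
  simp only [Complex.sub_re, Complex.sub_im, Complex.one_re, Complex.one_im, Complex.mul_re,
    Complex.mul_im, Complex.ofReal_re, Complex.ofReal_im]
  nlinarith [mul_nonneg (by nlinarith : (0 : ℝ) ≤ 1 - b ^ 2)
    (by nlinarith [norm_nonneg z] : 0 ≤ 1 - (z.re * z.re + z.im * z.im))]

lemma one_sub_mul_norm_le_norm_one_sub_mul (z : ℂ) {b : ℝ} (hb : 0 ≤ b) :
    1 - b * ‖z‖ ≤ ‖1 - b * z‖ := by
  simpa [abs_of_nonneg hb] using norm_sub_norm_le (1 : ℂ) (b * z)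

lemma one_sub_mul_ne_zero {z : ℂ} {b : ℝ} (hz : ‖z‖ ≤ 1) (hb0 : 0 ≤ b) (hb1 : b < 1) :
    1 - b * z ≠ 0 := by
  rw [← norm_pos_iff]
  nlinarith [one_sub_mul_norm_le_norm_one_sub_mul z hb0]

noncomputable def discMobius (b : ℝ) (z : ℂ) : ℂ := (1 - b) / 2 * (1 + z) * (1 - b * z)⁻¹

lemma discMobius_one {b : ℝ} (hb : b ≠ 1) : discMobius b 1 = 1 := by
  have : (1 : ℂ) - b ≠ 0 := sub_ne_zero.2 (by exact_mod_cast hb.symm)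
  rw [discMobius]; field_simp; ring

lemma discMobius_mem_closedBall_half {z : ℂ} {b : ℝ} (hz : ‖z‖ ≤ 1) (hb0 : 0 ≤ b) (hb1 : b < 1) :
    discMobius b z ∈ closedBall (1 / 2 : ℂ) (1 / 2) := by
  have hne := one_sub_mul_ne_zero hz hb0 hb1
  have : discMobius b z - 1 / 2 = (z - b) / (2 * (1 - b * z)) := by
    rw [discMobius]; field_simp; ring
  rw [mem_closedBall, dist_eq_norm, this, norm_div, norm_mul, Complex.norm_two,
    div_le_iff₀ (by positivity)]
  linarith [norm_sub_le_norm_one_sub_mul hz hb0 hb1.le]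

lemma norm_discMobius_le {z : ℂ} {b : ℝ} (hz : ‖z‖ ≤ 1 / 2) (hb0 : 0 ≤ b) (hb1 : b < 1) :
    ‖discMobius b z‖ ≤ 3 / 2 * (1 - b) := by
  have hden : 1 / 2 ≤ ‖1 - b * z‖ := by
    nlinarith [one_sub_mul_norm_le_norm_one_sub_mul z hb0]
  have hnum : ‖1 + z‖ ≤ 3 / 2 := (norm_add_le _ _).trans (by rw [norm_one]; linarith)
  rw [discMobius, norm_mul, norm_mul, norm_inv, norm_div, Complex.norm_two,
    show (1 : ℂ) - b = ((1 - b : ℝ) : ℂ) by push_cast; rfl, Complex.norm_of_nonneg (by linarith)]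
  calc (1 - b) / 2 * ‖1 + z‖ * ‖1 - b * z‖⁻¹ ≤ (1 - b) / 2 * (3 / 2) * 2 := by
        gcongr
        exact inv_le_of_inv_le₀ (by norm_num) (by linarith)
    _ = 3 / 2 * (1 - b) := by ring

lemma norm_sq_one_add_mul_sub_le {w : ℂ} {s : ℝ} (hw : ‖w‖ ^ 2 ≤ w.re) (hs : 0 ≤ s) :
    ‖(1 + s) * w - s‖ ^ 2 ≤ 1 - (1 - s ^ 2) * (1 - ‖w‖ ^ 2) := by
  rw [Complex.sq_norm, Complex.sq_norm, Complex.normSq_apply, Complex.normSq_apply] at *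
  simp only [Complex.sub_re, Complex.sub_im, Complex.mul_re, Complex.mul_im, Complex.add_re,
    Complex.add_im, Complex.one_re, Complex.one_im, Complex.ofReal_re, Complex.ofReal_im]
  nlinarith [mul_nonneg (mul_nonneg hs (by linarith : 0 ≤ 1 + s)) (sub_nonneg.2 hw)]

lemma norm_combination_le_one_of_norm_le {l α w z : ℂ} {r : ℝ} (hr : 0 ≤ r) (hl : ‖l‖ = 1)
    (hα : ‖α‖ ≤ 1) (hz : ‖z‖ ≤ 1) (hw : ‖w‖ ≤ (1 - r) / 2) :
    ‖(l - r * α) * w + r * z‖ ≤ 1 := by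
  have hlα : ‖l - r * α‖ ≤ 1 + r := by
    calc ‖l - r * α‖ ≤ ‖l‖ + r * ‖α‖ := by
          simpa [abs_of_nonneg hr] using norm_sub_le l (r * α)
      _ ≤ 1 + r := by rw [hl]; nlinarith
  calc ‖(l - r * α) * w + r * z‖ ≤ ‖l - r * α‖ * ‖w‖ + r * ‖z‖ := by
        simpa [abs_of_nonneg hr] using norm_add_le ((l - r * α) * w) (r * z)
    _ ≤ (1 + r) * ((1 - r) / 2) + r * 1 := by gcongr
    _ ≤ 1 := by nlinarith [sq_nonneg (1 - r)]

lemma norm_combination_le_one_of_dist_le {l w z : ℂ} {r t : ℝ} (hr0 : 0 ≤ r) (hr1 : r ≤ 1)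
    (ht0 : 0 ≤ t) (ht1 : t ≤ 1) (hl : ‖l‖ = 1) (hw : ‖w‖ ≤ 1)
    (hd : 2 * r * ‖z - t * l‖ ≤ (1 - r) ^ 2 * (1 - ‖w‖)) :
    ‖(l - r * (t * l)) * w + r * z‖ ≤ 1 := by
  have hrt : r * t ≤ r := mul_le_of_le_one_right hr0 ht1
  have key : (l - r * (t * l)) * w + r * z
      = l * (((1 - r * t : ℝ) : ℂ) * w + (r * t : ℝ)) + r * (z - t * l) := by
    push_cast; ring
  calc ‖(l - r * (t * l)) * w + r * z‖
      ≤ (1 - r * t) * ‖w‖ + r * t + r * ‖z - t * l‖ := by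
        rw [key]
        refine (norm_add_le _ _).trans ?_
        rw [norm_mul, hl, one_mul, norm_mul, Complex.norm_of_nonneg hr0]
        gcongr
        refine (norm_add_le _ _).trans_eq ?_
        rw [norm_mul, Complex.norm_of_nonneg (by nlinarith), Complex.norm_of_nonneg (by positivity)]
    _ ≤ 1 := by
        have : (1 - r) ^ 2 * (1 - ‖w‖) ≤ 2 * (1 - r * t) * (1 - ‖w‖) :=
          mul_le_mul_of_nonneg_right (by nlinarith) (by linarith)
        linarith

/-- The triangle inequality is too weak here: `‖w‖ ^ 2 ≤ w.re` is what keeps `(1 + r t) w - r t`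
in the unit disc. -/
lemma norm_neg_combination_le_one_of_dist_le {l w z : ℂ} {r t : ℝ} (hr0 : 0 ≤ r) (hr1 : r ≤ 1)
    (ht0 : 0 ≤ t) (ht1 : t ≤ 1) (hl : ‖l‖ = 1) (hw : ‖w‖ ^ 2 ≤ w.re)
    (hd : 2 * r * ‖z - t * l‖ ≤ (1 - r) ^ 2 * (1 - ‖w‖)) :
    ‖(-l - r * (t * l)) * w + r * z‖ ≤ 1 := by
  set d := ‖z - t * l‖
  have hw1 : ‖w‖ ≤ 1 := by nlinarith [Complex.re_le_norm w, norm_nonneg w]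
  have hrt : r * t ≤ r := mul_le_of_le_one_right hr0 ht1
  have hrd : r * d ≤ 1 / 2 := by nlinarith [norm_nonneg w]
  have key : (-l - r * (t * l)) * w + r * z
      = -(l * ((1 + (r * t : ℝ)) * w - (r * t : ℝ))) + r * (z - t * l) := by
    push_cast; ring
  have hmain : ‖(1 + (r * t : ℝ)) * w - (r * t : ℝ)‖ ≤ 1 - r * d := by
    have h1 : (1 - r) ^ 2 ≤ 1 - (r * t) ^ 2 := by
      nlinarith [mul_nonneg hr0 (sub_nonneg.2 hr1), mul_le_mul hrt hrt (mul_nonneg hr0 ht0) hr0]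
    have h2 : 1 - ‖w‖ ≤ 1 - ‖w‖ ^ 2 := by nlinarith [norm_nonneg w]
    have h3 := mul_le_mul h1 h2 (by linarith) (by nlinarith)
    rw [← sq_le_sq₀ (norm_nonneg _) (by linarith)]
    nlinarith [norm_sq_one_add_mul_sub_le hw (mul_nonneg hr0 ht0), sq_nonneg (r * d)]
  calc ‖(-l - r * (t * l)) * w + r * z‖ ≤ ‖(1 + (r * t : ℝ)) * w - (r * t : ℝ)‖ + r * d := by
        rw [key]
        refine (norm_add_le _ _).trans_eq ?_
        rw [norm_neg, norm_mul, hl, one_mul, norm_mul, Complex.norm_of_nonneg hr0]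
    _ ≤ 1 := by linarith

lemma norm_combination_le_one {l α w z : ℂ} {r t : ℝ} (hr0 : 0 ≤ r) (hr1 : r ≤ 1) (ht0 : 0 ≤ t)
    (ht1 : t ≤ 1) (hl : ‖l‖ = 1) (hα : α = t * l) (hz : ‖z‖ ≤ 1)
    (hw : w ∈ closedBall (1 / 2 : ℂ) (1 / 2))
    (h : ‖w‖ ≤ (1 - r) / 2 ∨ 2 * r * ‖z - α‖ ≤ (1 - r) ^ 2 * (1 - ‖w‖)) :
    ‖(l - r * α) * w + r * z‖ ≤ 1 ∧ ‖(-l - r * α) * w + r * z‖ ≤ 1 := by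
  rcases h with hw' | hd
  · have hα1 : ‖α‖ ≤ 1 := by rwa [hα, norm_mul, hl, mul_one, Complex.norm_of_nonneg ht0]
    exact ⟨norm_combination_le_one_of_norm_le hr0 hl hα1 hz hw',
      norm_combination_le_one_of_norm_le hr0 (by rwa [norm_neg]) hα1 hz hw'⟩
  · subst hα
    exact ⟨norm_combination_le_one_of_dist_le hr0 hr1 ht0 ht1 hl
      (norm_le_one_of_mem_closedBall_half hw) hd,
      norm_neg_combination_le_one_of_dist_le hr0 hr1 ht0 ht1 hl (mem_closedBall_half_iff.1 hw) hd⟩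

lemma norm_eq_one_and_eq_norm_mul {α l : ℂ} (hl : l = if α = 0 then 1 else α / (‖α‖ : ℂ)) :
    ‖l‖ = 1 ∧ α = ‖α‖ * l := by
  subst hl
  split_ifs with h
  · simp [h]
  · have : (‖α‖ : ℂ) ≠ 0 := by simpa using h
    exact ⟨by simp [h], by field_simp⟩

lemma hasSum_half_pow_succ : HasSum (fun n : ℕ => (1 / 2 : ℝ) ^ (n + 1)) 1 := by
  convert hasSum_geometric_two' 1 using 2 with n
  rw [pow_succ, one_div_pow]; ring

section HalfPowSeries

variable {E : Type*} [SeminormedAddCommGroup E] [NormedSpace ℝ E] {c : ℕ → E} {a : E} {ε : ℝ}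

lemma norm_le_of_hasSum_half_pow_smul (ha : HasSum (fun n => (1 / 2 : ℝ) ^ (n + 1) • c n) a)
    (hc : ∀ n, ‖c n‖ ≤ ε) : ‖a‖ ≤ ε :=
  ha.norm_le_of_bounded (one_mul ε ▸ hasSum_half_pow_succ.mul_right ε) fun n => by
    rw [norm_smul_of_nonneg (by positivity)]
    exact mul_le_mul_of_nonneg_left (hc n) (by positivity)

lemma norm_le_one_sub_of_hasSum_half_pow_smul
    (ha : HasSum (fun n => (1 / 2 : ℝ) ^ (n + 1) • c n) a) (hc : ∀ n, ‖c n‖ ≤ 1) (N : ℕ)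
    (hN : ‖c N‖ ≤ ε) : ‖a‖ ≤ 1 - (1 - ε) * (1 / 2) ^ (N + 1) := by
  refine ha.norm_le_of_bounded
    (hasSum_half_pow_succ.sub (hasSum_ite_eq N ((1 - ε) * (1 / 2) ^ (N + 1)))) fun n => ?_
  rw [norm_smul_of_nonneg (by positivity)]
  split_ifs with h
  · subst h; nlinarith [pow_pos (by norm_num : (0 : ℝ) < 1 / 2) (n + 1)]
  · simpa using mul_le_mul_of_nonneg_left (hc n) (by positivity : (0 : ℝ) ≤ (1 / 2) ^ (n + 1))

lemma norm_le_or_le_one_sub_norm_of_hasSum_half_pow_smul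
    (ha : HasSum (fun n => (1 / 2 : ℝ) ^ (n + 1) • c n) a) (hc : ∀ n, ‖c n‖ ≤ 1) (hε : ε ≤ 1 / 2)
    {s : ℝ} (hcs : ∀ n, (1 / 2) ^ (n + 3) ≤ s → ‖c n‖ ≤ ε) : ‖a‖ ≤ ε ∨ s ≤ 1 - ‖a‖ := by
  have ha1 : ‖a‖ ≤ 1 := norm_le_of_hasSum_half_pow_smul ha hc
  rcases le_or_gt s 0 with hs0 | hs0
  · exact Or.inr (by linarith)
  rcases le_or_gt ((1 / 2) ^ 3) s with hs | hs
  · refine Or.inl (norm_le_of_hasSum_half_pow_smul ha fun n => hcs n (le_trans ?_ hs))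
    exact pow_le_pow_of_le_one (by norm_num) (by norm_num) (by omega)
  obtain ⟨n, hn, hn'⟩ := exists_nat_pow_near_of_lt_one (x := 8 * s) (y := 1 / 2) (by positivity)
    (by norm_num at hs; linarith) (by norm_num) (by norm_num)
  have hc' : ‖c (n + 1)‖ ≤ ε :=
    hcs (n + 1) (by rw [show (1 / 2 : ℝ) ^ (n + 1 + 3) = (1 / 2) ^ (n + 1) / 8 by ring]; linarith)
  have ha' := norm_le_one_sub_of_hasSum_half_pow_smul ha hc (n + 1) hc'
  rw [show (1 / 2 : ℝ) ^ (n + 1 + 1) = (1 / 2) ^ n / 4 by ring] at ha'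
  have := mul_le_mul_of_nonneg_right hε (pow_nonneg (by norm_num : (0 : ℝ) ≤ 1 / 2) n)
  exact Or.inr (by nlinarith)

end HalfPowSeries

theorem Subalgebra.exists_mem_mul_one_sub_eq_one {𝕜 E : Type*} [NormedField 𝕜] [NormedRing E]
    [NormedAlgebra 𝕜 E] [CompleteSpace E] {A : Subalgebra 𝕜 E} (hA : IsClosed (A : Set E))
    {a : E} (ha : a ∈ A) (h : ‖a‖ < 1) : ∃ q ∈ A, q * (1 - a) = 1 := by
  have : CompleteSpace A := hA.completeSpace_coe
  let v := Units.oneSub (⟨a, ha⟩ : A) h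
  exact ⟨((v⁻¹ : Aˣ) : A), SetLike.coe_mem _, congrArg Subtype.val v.inv_mul⟩

lemma ContinuousMap.norm_eq_norm_apply_of_forall_le {X E : Type*} [TopologicalSpace X]
    [CompactSpace X] [SeminormedAddCommGroup E] {F : C(X, E)} {x : X} (h : ∀ y, ‖F y‖ ≤ ‖F x‖) :
    ‖F‖ = ‖F x‖ :=
  le_antisymm ((ContinuousMap.norm_le _ (norm_nonneg _)).2 h) (F.norm_coe_le_norm x)

section UniformAlgebra

variable {X : Type*} [TopologicalSpace X] [CompactSpace X] {A : Subalgebra ℂ C(X, ℂ)} {x : X}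

lemma mem_uaSlice_of_forall_norm_le {g : C(X, ℂ)} {l : ℂ} (hl : ‖l‖ = 1) (hgA : g ∈ A)
    (hgx : g x = l) (hg : ∀ y, ‖g y‖ ≤ 1) : g ∈ uaSlice A x l :=
  ⟨⟨hgA, by rw [ContinuousMap.norm_eq_norm_apply_of_forall_le (x := x), hgx, hl]; simpa [hgx, hl]⟩,
    hgx⟩

lemma mem_uaSlice_one_iff {g : C(X, ℂ)} :
    g ∈ uaSlice A x 1 ↔ g ∈ A ∧ g x = 1 ∧ ∀ y, ‖g y‖ ≤ 1 := by
  refine ⟨fun ⟨⟨hgA, hg⟩, hgx⟩ => ⟨hgA, hgx, fun y => hg ▸ g.norm_coe_le_norm y⟩,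
    fun ⟨hgA, hgx, hg⟩ => mem_uaSlice_of_forall_norm_le norm_one hgA hgx hg⟩

lemma mul_mem_uaSlice_one {g h : C(X, ℂ)} (hg : g ∈ uaSlice A x 1) (hh : h ∈ uaSlice A x 1) :
    g * h ∈ uaSlice A x 1 := by
  rw [mem_uaSlice_one_iff] at *
  refine ⟨mul_mem hg.1 hh.1, by simp [hg.2.1, hh.2.1], fun y => ?_⟩
  simpa using mul_le_one₀ (hg.2.2 y) (norm_nonneg _) (hh.2.2 y)

lemma one_mem_uaSlice_one : (1 : C(X, ℂ)) ∈ uaSlice A x 1 :=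
  mem_uaSlice_one_iff.2 ⟨one_mem A, rfl, fun y => by simp⟩

lemma pow_mem_uaSlice_one {g : C(X, ℂ)} (hg : g ∈ uaSlice A x 1) (k : ℕ) :
    g ^ k ∈ uaSlice A x 1 := by
  induction k with
  | zero => exact one_mem_uaSlice_one
  | succ k ih => rw [pow_succ]; exact mul_mem_uaSlice_one ih hg

lemma exists_mem_uaSlice_one_norm_lt_one (hx : x ∈ choquetBdry A) {y : X} (hy : y ≠ x) :
    ∃ g ∈ uaSlice A x 1, ‖g y‖ < 1 := by
  obtain ⟨S, -, hS, hSx⟩ := hx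
  have hxS : ∀ E ∈ S, x ∈ E := Set.mem_sInter.1 (hSx ▸ rfl)
  obtain ⟨E, hE, hyE⟩ : ∃ E ∈ S, y ∉ E := by
    simpa [Set.mem_sInter] using (hSx ▸ hy : y ∉ ⋂₀ S)
  obtain ⟨g, hgA, hg, hEg, hgE⟩ := hS E hE
  refine ⟨g, ⟨⟨hgA, hg⟩, (hEg ▸ hxS E hE : x ∈ {x | g x = 1})⟩,
    lt_of_le_of_ne (hg ▸ g.norm_coe_le_norm y) fun h => hyE (hgE ▸ h)⟩

/-- Since `uaSlice A x 1` is closed under products and `‖(g * h) y‖ ≤ min ‖g y‖ ‖h y‖`, the sets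
`{y | ‖g y‖ < 1}` form a directed open cover of `K`. -/
lemma exists_mem_uaSlice_one_forall_norm_lt_one (hx : x ∈ choquetBdry A) {K : Set X}
    (hK : IsCompact K) (hxK : x ∉ K) : ∃ g ∈ uaSlice A x 1, ∀ y ∈ K, ‖g y‖ < 1 := by
  have : Nonempty (uaSlice A x 1) := ⟨⟨1, one_mem_uaSlice_one⟩⟩
  let V : uaSlice A x 1 → Set X := fun g => {y | ‖(g : C(X, ℂ)) y‖ < 1}
  have hV : ∀ g, IsOpen (V g) := fun g => isOpen_lt (by fun_prop) continuous_const
  have hKV : K ⊆ ⋃ g, V g := fun y hy => by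
    obtain ⟨g, hg, hgy⟩ := exists_mem_uaSlice_one_norm_lt_one hx (ne_of_mem_of_not_mem hy hxK)
    exact Set.mem_iUnion.2 ⟨⟨g, hg⟩, hgy⟩
  have hVdir : Directed (· ⊆ ·) V := fun g h => by
    have hg1 := fun y => (mem_uaSlice_one_iff.1 g.2).2.2 y
    have hh1 := fun y => (mem_uaSlice_one_iff.1 h.2).2.2 y
    refine ⟨⟨g * h, mul_mem_uaSlice_one g.2 h.2⟩, fun y hy => ?_, fun y hy => ?_⟩ <;>
    · simp only [V, Set.mem_ofPred_eq, ContinuousMap.mul_apply, norm_mul] at hy ⊢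
      nlinarith [hg1 y, hh1 y, norm_nonneg ((g : C(X, ℂ)) y), norm_nonneg ((h : C(X, ℂ)) y)]
  obtain ⟨⟨g, hg⟩, hKg⟩ := hK.elim_directed_cover V hV hKV hVdir
  exact ⟨g, hg, hKg⟩

lemma exists_mem_uaSlice_one_forall_norm_le (hx : x ∈ choquetBdry A) {K : Set X}
    (hK : IsCompact K) (hxK : x ∉ K) {δ : ℝ} (hδ : 0 < δ) :
    ∃ g ∈ uaSlice A x 1, ∀ y ∈ K, ‖g y‖ ≤ δ := by
  obtain ⟨p, hp, hpK⟩ := exists_mem_uaSlice_one_forall_norm_lt_one hx hK hxK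
  obtain ⟨m, hm, hpm⟩ := hK.exists_forall_le' (f := fun y => -‖p y‖) (by fun_prop)
    (a := -1) fun y hy => neg_lt_neg (hpK y hy)
  obtain ⟨k, hk⟩ := exists_pow_lt_of_lt_one hδ (by linarith : -m < 1)
  refine ⟨p ^ k, pow_mem_uaSlice_one hp k, fun y hy => ?_⟩
  calc ‖(p ^ k) y‖ = ‖p y‖ ^ k := by simp
    _ ≤ (-m) ^ k := pow_le_pow_left₀ (norm_nonneg _) (by linarith [hpm y hy]) k
    _ ≤ δ := hk.le

lemma exists_disc_peak (hA : IsClosed (A : Set C(X, ℂ))) (hx : x ∈ choquetBdry A) {K : Set X}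
    (hK : IsCompact K) (hxK : x ∉ K) {ε : ℝ} (hε : 0 < ε) :
    ∃ h ∈ A, h x = 1 ∧ (∀ y, h y ∈ closedBall (1 / 2 : ℂ) (1 / 2)) ∧ ∀ y ∈ K, ‖h y‖ ≤ ε := by
  obtain ⟨g, hg, hgK⟩ := exists_mem_uaSlice_one_forall_norm_le hx hK hxK (δ := 1 / 2) (by norm_num)
  obtain ⟨hgA, hgx, hg1⟩ := mem_uaSlice_one_iff.1 hg
  obtain ⟨b, hb0, hb1, hbε⟩ : ∃ b : ℝ, 0 ≤ b ∧ b < 1 ∧ 3 / 2 * (1 - b) ≤ ε :=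
    ⟨1 - min ε 1 / 2, by linarith [min_le_right ε 1], by linarith [lt_min hε one_pos],
      by linarith [min_le_left ε 1]⟩
  have hbg : ‖b • g‖ < 1 := by
    rw [norm_smul, Real.norm_of_nonneg hb0, hg.1.2, mul_one]; exact hb1
  obtain ⟨q, hqA, hq⟩ := Subalgebra.exists_mem_mul_one_sub_eq_one hA (A.smul_mem hgA b) hbg
  have hh : ∀ y, ((((1 - b) / 2 : ℝ) : ℂ) • ((1 + g) * q)) y = discMobius b (g y) := fun y => by
    have hqy : q y * (1 - b * g y) = 1 := by simpa using congrArg (· y) hq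
    simp [discMobius, eq_inv_of_mul_eq_one_left hqy]
    ring
  refine ⟨(((1 - b) / 2 : ℝ) : ℂ) • ((1 + g) * q),
    A.smul_mem (mul_mem (add_mem (one_mem A) hgA) hqA) _, ?_, ?_, ?_⟩
  · rw [hh, hgx, discMobius_one hb1.ne]
  · exact fun y => hh y ▸ discMobius_mem_closedBall_half (hg1 y) hb0 hb1
  · intro y hy
    rw [hh]
    exact (norm_discMobius_le (hgK y hy) hb0 hb1).trans hbε

/-- `u = ∑ 2⁻⁽ⁿ⁺¹⁾ hₙ`, where `hₙ` is a disc peak that is `ε`-small on `{y | 2⁻⁽ⁿ⁺³⁾ ≤ φ y}`. -/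
lemma exists_disc_peak_norm_le_or_le_one_sub_norm (hA : IsClosed (A : Set C(X, ℂ)))
    (hx : x ∈ choquetBdry A) {φ : X → ℝ} (hφ : Continuous φ) (hφx : φ x = 0) {ε : ℝ}
    (hε0 : 0 < ε) (hε : ε ≤ 1 / 2) :
    ∃ u ∈ A, u x = 1 ∧ (∀ y, u y ∈ closedBall (1 / 2 : ℂ) (1 / 2)) ∧
      ∀ y, ‖u y‖ ≤ ε ∨ φ y ≤ 1 - ‖u y‖ := by
  have hK : ∀ n : ℕ, IsCompact {y | (1 / 2 : ℝ) ^ (n + 3) ≤ φ y} := fun n =>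
    (isClosed_le continuous_const hφ).isCompact
  have hxK : ∀ n : ℕ, x ∉ {y | (1 / 2 : ℝ) ^ (n + 3) ≤ φ y} := fun n => by
    simp only [Set.mem_ofPred_eq, hφx, not_le]; positivity
  choose h hhA hhx hh hhK using fun n => exists_disc_peak hA hx (hK n) (hxK n) hε0
  have hh1 : ∀ n y, ‖h n y‖ ≤ 1 := fun n y => norm_le_one_of_mem_closedBall_half (hh n y)
  have hsum : Summable fun n => (1 / 2 : ℝ) ^ (n + 1) • h n := by
    refine Summable.of_norm_bounded hasSum_half_pow_succ.summable fun n => ?_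
    rw [norm_smul_of_nonneg (by positivity)]
    exact mul_le_of_le_one_right (by positivity)
      ((ContinuousMap.norm_le _ zero_le_one).2 (hh1 n))
  set u := ∑' n, (1 / 2 : ℝ) ^ (n + 1) • h n
  have hu : ∀ y, HasSum (fun n => (1 / 2 : ℝ) ^ (n + 1) • h n y) (u y) := fun y => by
    simpa only [ContinuousMap.evalCLM_apply, ContinuousMap.smul_apply] using
      (ContinuousMap.evalCLM ℝ y).hasSum hsum.hasSum
  refine ⟨u, ?_, ?_, fun y => ?_, fun y => ?_⟩
  · refine hA.mem_of_tendsto hsum.hasSum.tendsto_sum_nat (Filter.Eventually.of_forall fun N => ?_)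
    exact A.sum_mem fun n _ => by
      simpa only [Complex.coe_smul] using A.smul_mem (hhA n) ((1 / 2 : ℝ) ^ (n + 1) : ℝ)
  · refine (hu x).unique ?_
    simpa [hhx] using hasSum_half_pow_succ.smul_const (1 : ℂ)
  · have := (hu y).sub (hasSum_half_pow_succ.smul_const (1 / 2 : ℂ))
    simp only [← smul_sub, one_smul] at this
    rw [mem_closedBall, dist_eq_norm]
    exact norm_le_of_hasSum_half_pow_smul this fun n => by
      simpa [mem_closedBall, dist_eq_norm] using hh n y
  · exact norm_le_or_le_one_sub_norm_of_hasSum_half_pow_smul (hu y) (hh1 · y) hε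
      fun n hn => hhK n y hn

end UniformAlgebra

theorem additive_bishop_lemma_general
    {X : Type*} [TopologicalSpace X] [CompactSpace X]
    (A : Subalgebra ℂ C(X, ℂ)) (hA : IsClosed (A : Set C(X, ℂ)))
    (f : C(X, ℂ)) (hf : f ∈ uaSphere A)
    (x : X) (hx : x ∈ choquetBdry A)
    (α : ℂ) (hα : α = f x)
    (lam : ℂ) (hlam : lam = if α = 0 then 1 else α / (‖α‖ : ℂ))
    (r : ℝ) (hr0 : 0 < r) (hr1 : r < 1) :
    ∃ u : C(X, ℂ), u ∈ A ∧
      (u x = 1 ∧ ‖u‖ = 1 ∧ {y | u y = 1} = {y | ‖u y‖ = 1}) ∧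
      (lam - (r : ℂ) * α) • u + (r : ℂ) • f ∈ uaSphere A ∧
      (-lam - (r : ℂ) * α) • u + (r : ℂ) • f ∈ uaSphere A ∧
      ((lam - (r : ℂ) * α) • u + (r : ℂ) • f) x = lam ∧
      ((-lam - (r : ℂ) * α) • u + (r : ℂ) • f) x = -lam := by
  obtain ⟨hfA, hf1⟩ := hf
  have hfy : ∀ y, ‖f y‖ ≤ 1 := fun y => hf1 ▸ f.norm_coe_le_norm y
  obtain ⟨hlam1, hαlam⟩ := norm_eq_one_and_eq_norm_mul hlam
  obtain ⟨u, huA, hux, hu, hdich⟩ := exists_disc_peak_norm_le_or_le_one_sub_norm hA hx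
    (φ := fun y => 2 * r * ‖f y - α‖ / (1 - r) ^ 2) (by fun_prop) (by simp [hα])
    (ε := (1 - r) / 2) (by linarith) (by linarith)
  have hbound : ∀ y, ‖(lam - r * α) * u y + r * f y‖ ≤ 1 ∧ ‖(-lam - r * α) * u y + r * f y‖ ≤ 1 :=
    fun y => norm_combination_le_one hr0.le hr1.le (norm_nonneg α) (hα ▸ hfy x) hlam1 hαlam (hfy y)
      (hu y) ((hdich y).imp_right fun h => (div_le_iff₀' (by nlinarith)).1 h)
  have hg : ∀ l : ℂ, ‖l‖ = 1 → (∀ y, ‖(l - r * α) * u y + r * f y‖ ≤ 1) →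
      (l - (r : ℂ) * α) • u + (r : ℂ) • f ∈ uaSlice A x l := fun l hl hle =>
    mem_uaSlice_of_forall_norm_le hl (add_mem (A.smul_mem huA _) (A.smul_mem hfA _))
      (by simp [hux, hα]) (by simpa using hle)
  obtain ⟨hplus, hplusx⟩ := hg lam hlam1 fun y => (hbound y).1
  obtain ⟨hminus, hminusx⟩ := hg (-lam) (by rwa [norm_neg]) fun y => (hbound y).2
  have hu1 : ‖u‖ = 1 := (mem_uaSlice_of_forall_norm_le norm_one huA hux fun y =>
    norm_le_one_of_mem_closedBall_half (hu y)).1.2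
  exact ⟨u, huA, ⟨hux, hu1, setOf_eq_one_eq_setOf_norm_eq_one hu⟩, hplus, hminus, hplusx,
    hminusx⟩

/-- **An additive Bishop's lemma.** For `f ∈ S(A)`, `x ∈ Ch(A)`, `α = f(x)`,
`λ = α/|α|` (`λ = 1` if `α = 0`) and `0 < r < 1`, there is a peaking function `u` for
`x` such that `g₊ = (λ - rα)·u + r·f` and `g₋ = (-λ - rα)·u + r·f` lie in `S(A)` with
`g₊(x) = λ` and `g₋(x) = -λ`. -/
theorem additive_bishop_lemma
    {X : Type*} [TopologicalSpace X] [CompactSpace X] [T2Space X] [Nonempty X]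
    (A : Subalgebra ℂ C(X, ℂ)) (hA : IsClosed (A : Set C(X, ℂ)))
    (hAsep : ∀ x₁ x₂ : X, x₁ ≠ x₂ → ∃ f ∈ A, f x₁ ≠ f x₂)
    (f : C(X, ℂ)) (hf : f ∈ uaSphere A)
    (x : X) (hx : x ∈ choquetBdry A)
    (α : ℂ) (hα : α = f x)
    (lam : ℂ) (hlam : lam = if α = 0 then 1 else α / (‖α‖ : ℂ))
    (r : ℝ) (hr0 : 0 < r) (hr1 : r < 1) :
    ∃ u : C(X, ℂ), u ∈ A ∧
      (u x = 1 ∧ ‖u‖ = 1 ∧ {y | u y = 1} = {y | ‖u y‖ = 1}) ∧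
      (lam - (r : ℂ) * α) • u + (r : ℂ) • f ∈ uaSphere A ∧
      (-lam - (r : ℂ) * α) • u + (r : ℂ) • f ∈ uaSphere A ∧
      ((lam - (r : ℂ) * α) • u + (r : ℂ) • f) x = lam ∧
      ((-lam - (r : ℂ) * α) • u + (r : ℂ) • f) x = -lam :=
  additive_bishop_lemma_general A hA f hf x hx α hα lam hlam r hr0 hr1
end
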